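/- arXiv:2207.03788 — 5 statements merged into one kernel-verified Lean document; each statement's English description precedes it below -/
import Mathlib

section
/- Let α > 0, β ≤ α, and let ω: [0,∞) → [0,∞) be a majorant (continuous, increasing, ω(0) = 0, with ω(t)/t non-increasing for t > 0). Define χ(t) = (1-t²)^α (log(e/(1-t²)))^β for t ∈ [0,1) and φ(t) = 1/ω(χ(t)). Then φ is a doubling weight: there exists a constant C > 1 such that φ(1 - s/2) < C·φ(1 - s) for all s ∈ (0,1]. -/
set_option maxHeartbeats 1600000 in
theorem statement4 (α β : ℝ) (hα : 0 < α) (hβ : β ≤ α)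
    (ω : ℝ → ℝ) (hω0 : ω 0 = 0)
    (hωcont : ContinuousOn ω (Set.Ici 0))
    (hωmono : MonotoneOn ω (Set.Ici 0))
    (hωdec : ∀ s t : ℝ, 0 < s → s ≤ t → ω t / t ≤ ω s / s)
    (χ : ℝ → ℝ)
    (hχ : ∀ t ∈ Set.Ico (0 : ℝ) 1,
      χ t = (1 - t ^ 2) ^ α * (Real.log (Real.exp 1 / (1 - t ^ 2))) ^ β)
    (hpos : ∀ t ∈ Set.Ico (0 : ℝ) 1, 0 < ω (χ t)) :
    ∃ C : ℝ, 1 < C ∧ ∀ s ∈ Set.Ioc (0 : ℝ) 1,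
      1 / ω (χ (1 - s / 2)) < C * (1 / ω (χ (1 - s))) := by
  have hlog2 : 0 < Real.log 2 := Real.log_pos (by norm_num)
  have hb1 : (1:ℝ) ≤ 1 + Real.log 2 := by linarith
  set K : ℝ := 2 ^ α * (1 + Real.log 2) ^ |β| with hKdef
  have h2α : (1:ℝ) ≤ 2 ^ α := Real.one_le_rpow (by norm_num) hα.le
  have hbβ : (1:ℝ) ≤ (1 + Real.log 2) ^ |β| := Real.one_le_rpow hb1 (abs_nonneg β)
  have hK1 : 1 ≤ K := by nlinarith
  refine ⟨K + 1, by linarith, ?_⟩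
  intro s hs
  obtain ⟨hs0, hs1⟩ := hs
  have ht1 : (1 - s) ∈ Set.Ico (0:ℝ) 1 := ⟨by linarith, by linarith⟩
  have ht2 : (1 - s/2) ∈ Set.Ico (0:ℝ) 1 := ⟨by linarith, by linarith⟩
  obtain ⟨u1, hu1⟩ : ∃ u : ℝ, u = 1 - (1 - s)^2 := ⟨_, rfl⟩
  obtain ⟨u2, hu2⟩ : ∃ u : ℝ, u = 1 - (1 - s/2)^2 := ⟨_, rfl⟩
  have hu1pos : 0 < u1 := by rw [hu1]; nlinarith [mul_pos hs0 (by linarith : (0:ℝ) < 2 - s)]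
  have hu2pos : 0 < u2 := by rw [hu2]; nlinarith [mul_pos hs0 (by linarith : (0:ℝ) < 2 - s/2)]
  have hu11 : u1 ≤ 1 := by rw [hu1]; nlinarith [sq_nonneg (1-s)]
  have hu21 : u2 ≤ 1 := by rw [hu2]; nlinarith [sq_nonneg (1-s/2)]
  have h12 : u2 ≤ u1 := by rw [hu1, hu2]; nlinarith [mul_nonneg hs0.le (by linarith : (0:ℝ) ≤ 4 - 3*s)]
  have h21 : u1 ≤ 2 * u2 := by rw [hu1, hu2]; nlinarith [sq_nonneg s]
  obtain ⟨L1, hL1def⟩ : ∃ L : ℝ, L = Real.log (Real.exp 1 / u1) := ⟨_, rfl⟩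
  obtain ⟨L2, hL2def⟩ : ∃ L : ℝ, L = Real.log (Real.exp 1 / u2) := ⟨_, rfl⟩
  have hL1 : L1 = 1 - Real.log u1 := by
    rw [hL1def, Real.log_div (Real.exp_ne_zero 1) (ne_of_gt hu1pos), Real.log_exp]
  have hL2 : L2 = 1 - Real.log u2 := by
    rw [hL2def, Real.log_div (Real.exp_ne_zero 1) (ne_of_gt hu2pos), Real.log_exp]
  have hlogu1 : Real.log u1 ≤ 0 := Real.log_nonpos hu1pos.le hu11
  have hlogu2 : Real.log u2 ≤ 0 := Real.log_nonpos hu2pos.le hu21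
  have hL1one : 1 ≤ L1 := by rw [hL1]; linarith
  have hL2one : 1 ≤ L2 := by rw [hL2]; linarith
  have hL1pos : 0 < L1 := by linarith
  have hL2pos : 0 < L2 := by linarith
  have hL12 : L1 ≤ L2 := by
    rw [hL1, hL2]
    have := Real.log_le_log hu2pos h12
    linarith
  have hL2b : L2 ≤ (1 + Real.log 2) * L1 := by
    have h1 : Real.log (u1 / 2) ≤ Real.log u2 := by
      apply Real.log_le_log (by positivity)
      linarith
    rw [Real.log_div (ne_of_gt hu1pos) two_ne_zero] at h1
    nlinarith
  -- the key pointwise bound on χ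
  have hχ1 : χ (1 - s) = u1 ^ α * L1 ^ β := by
    rw [hχ _ ht1, hL1def, hu1]
  have hχ2 : χ (1 - s/2) = u2 ^ α * L2 ^ β := by
    rw [hχ _ ht2, hL2def, hu2]
  have hχ2pos : 0 < u2 ^ α * L2 ^ β :=
    mul_pos (Real.rpow_pos_of_pos hu2pos α) (Real.rpow_pos_of_pos hL2pos β)
  have hχ1pos : 0 < u1 ^ α * L1 ^ β :=
    mul_pos (Real.rpow_pos_of_pos hu1pos α) (Real.rpow_pos_of_pos hL1pos β)
  have hbase : u1 ^ α ≤ 2 ^ α * u2 ^ α := by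
    rw [← Real.mul_rpow (by norm_num) hu2pos.le]
    exact Real.rpow_le_rpow hu1pos.le h21 hα.le
  have hlogpart : L1 ^ β ≤ (1 + Real.log 2) ^ |β| * L2 ^ β := by
    rcases le_or_gt 0 β with hb | hb
    · have h1 : L1 ^ β ≤ L2 ^ β := Real.rpow_le_rpow hL1pos.le hL12 hb
      have h2 : (0:ℝ) ≤ L2 ^ β := (Real.rpow_pos_of_pos hL2pos β).le
      have h3 : L2 ^ β ≤ (1 + Real.log 2) ^ |β| * L2 ^ β := le_mul_of_one_le_left h2 hbβ
      linarith
    · rw [abs_of_neg hb]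
      have hd : L2 / (1 + Real.log 2) ≤ L1 := by
        rw [div_le_iff₀ (by linarith : (0:ℝ) < 1 + Real.log 2)]
        nlinarith [hL2b]
      have hdpos : 0 < L2 / (1 + Real.log 2) := div_pos hL2pos (by linarith)
      have h1 : L1 ^ β ≤ (L2 / (1 + Real.log 2)) ^ β :=
        Real.rpow_le_rpow_of_nonpos hdpos hd hb.le
      calc L1 ^ β ≤ (L2 / (1 + Real.log 2)) ^ β := h1
        _ = L2 ^ β / (1 + Real.log 2) ^ β := Real.div_rpow hL2pos.le (by linarith : (0:ℝ) ≤ 1 + Real.log 2) β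
        _ = (1 + Real.log 2) ^ (-β) * L2 ^ β := by
            rw [Real.rpow_neg (by linarith)]
            ring
  have hχbound : χ (1 - s) ≤ K * χ (1 - s/2) := by
    rw [hχ1, hχ2, hKdef]
    calc u1 ^ α * L1 ^ β ≤ (2 ^ α * u2 ^ α) * ((1 + Real.log 2) ^ |β| * L2 ^ β) := by
          apply mul_le_mul hbase hlogpart (Real.rpow_pos_of_pos hL1pos β).le
            (mul_nonneg (Real.rpow_pos_of_pos two_pos α).le (Real.rpow_pos_of_pos hu2pos α).le)
      _ = 2 ^ α * (1 + Real.log 2) ^ |β| * (u2 ^ α * L2 ^ β) := by ring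
  -- compare ω values
  obtain ⟨a, ha⟩ : ∃ x : ℝ, x = χ (1 - s) := ⟨_, rfl⟩
  obtain ⟨b, hb⟩ : ∃ x : ℝ, x = χ (1 - s/2) := ⟨_, rfl⟩
  have hapos : 0 < a := by rw [ha, hχ1]; exact hχ1pos
  have hbpos : 0 < b := by rw [hb, hχ2]; exact hχ2pos
  have hωb0 : 0 ≤ ω b := by
    rw [← hω0]
    exact hωmono Set.self_mem_Ici hbpos.le hbpos.le
  have hωab : ω a ≤ K * ω b := by
    rcases le_or_gt a b with h | h
    · have h1 : ω a ≤ ω b := hωmono hapos.le hbpos.le h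
      have h2 : ω b ≤ K * ω b := le_mul_of_one_le_left hωb0 hK1
      linarith
    · have h1 := hωdec b a hbpos h.le
      have h2 : ω a ≤ (a / b) * ω b := by
        rw [div_le_div_iff₀ hapos hbpos] at h1
        rw [div_mul_eq_mul_div, le_div_iff₀ hbpos]
        linarith
      have h3 : a / b ≤ K := by
        rw [div_le_iff₀ hbpos]
        rw [ha, hb]; exact hχbound
      calc ω a ≤ (a / b) * ω b := h2
        _ ≤ K * ω b := mul_le_mul_of_nonneg_right h3 hωb0
  have hωa : 0 < ω a := by rw [ha]; exact hpos _ ht1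
  have hωbp : 0 < ω b := by rw [hb]; exact hpos _ ht2
  rw [← ha, ← hb]
  rw [mul_one_div, div_lt_div_iff₀ hωbp hωa]
  have : ω b ≤ K * ω b + ω b := by linarith
  nlinarith [hωab, hωbp]
end

section
/- Let ω(t) = t and let f be a harmonic Bloch mapping on the unit disk, i.e., a complex-valued harmonic function with semi-norm ‖f‖_s = sup_{z∈𝔻}(1-|z|²)Λ_f(z) < ∞, where Λ_f(z) = |f_z(z)| + |f_{z̄}(z)|. Define B_f(z) = (1-|z|²)Λ_f(z). Then for all z₁, z₂ ∈ 𝔻, |B_f(z₁) - B_f(z₂)| ≤ (3√3/2)·‖f‖_s·ρ(z₁,z₂), where ρ(z₁,z₂) = |(z₁-z₂)/(1-z̄₂z₁)| is the pseudo-hyperbolic metric. -/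
/-!
For holomorphic `F` write `B_F(z) = (1 - |z|²) |F z|`. Since `|h'| + |g'|` is the maximum of
`|h' + ν g'|` over `|ν| = 1`, choosing `ν` optimal at `z₁` bounds `B(z₁) - B(z₂)` by
`B_F(z₁) - B_F(z₂)` for the holomorphic `F = h' + ν g'`, which still satisfies `B_F ≤ K`.
Pulling `F` back by the disc automorphism taking `0` to `z₂` preserves `B_F` and moves `z₂` to `0`
and `z₁` to a point `α` with `|α| = ρ(z₁, z₂)`. Schwarz–Pick, transported to every point of the
disc, gives a Riccati differential inequality for `B_F` along the radius `[0, α]`, and a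
comparison argument yields `B_F(α) ≤ B_F(0) + (3√3/2) K |α|`.
-/

open Metric Set Complex ComplexConjugate

noncomputable def diskMobius (a w : ℂ) : ℂ := (a + w) / (1 + conj a * w)

section DiskMobius

variable {a w : ℂ}

lemma one_add_conj_mul_ne_zero (ha : ‖a‖ < 1) (hw : ‖w‖ < 1) : 1 + conj a * w ≠ 0 := by
  have hlt : ‖conj a * w‖ < 1 := by
    rw [norm_mul, Complex.norm_conj]
    nlinarith [norm_nonneg a, norm_nonneg w]
  intro h
  rw [show conj a * w = -1 by linear_combination h, norm_neg, norm_one] at hlt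
  exact hlt.false

lemma sq_norm_one_add_conj_mul_sub_sq_norm_add (a w : ℂ) :
    ‖1 + conj a * w‖ ^ 2 - ‖a + w‖ ^ 2 = (1 - ‖a‖ ^ 2) * (1 - ‖w‖ ^ 2) := by
  simp only [Complex.sq_norm, Complex.normSq_apply, Complex.add_re, Complex.add_im,
    Complex.mul_re, Complex.mul_im, Complex.conj_re, Complex.conj_im, Complex.one_re,
    Complex.one_im]
  ring

lemma one_sub_sq_norm_diskMobius (ha : ‖a‖ < 1) (hw : ‖w‖ < 1) :
    1 - ‖diskMobius a w‖ ^ 2 = (1 - ‖a‖ ^ 2) * (1 - ‖w‖ ^ 2) / ‖1 + conj a * w‖ ^ 2 := by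
  have hden : 0 < ‖1 + conj a * w‖ := norm_pos_iff.2 (one_add_conj_mul_ne_zero ha hw)
  rw [diskMobius, norm_div, div_pow, eq_div_iff (by positivity), sub_mul,
    div_mul_cancel₀ _ (by positivity)]
  linear_combination sq_norm_one_add_conj_mul_sub_sq_norm_add a w

lemma norm_diskMobius_lt_one (ha : ‖a‖ < 1) (hw : ‖w‖ < 1) : ‖diskMobius a w‖ < 1 := by
  have hden : 0 < ‖1 + conj a * w‖ := norm_pos_iff.2 (one_add_conj_mul_ne_zero ha hw)
  have hpos : 0 < 1 - ‖diskMobius a w‖ ^ 2 := by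
    rw [one_sub_sq_norm_diskMobius ha hw]
    exact div_pos (mul_pos (by nlinarith [norm_nonneg a]) (by nlinarith [norm_nonneg w]))
      (by positivity)
  nlinarith [norm_nonneg (diskMobius a w)]

lemma diskMobius_zero_right (a : ℂ) : diskMobius a 0 = a := by
  simp [diskMobius]

lemma diskMobius_neg_self (a : ℂ) : diskMobius (-a) a = 0 := by
  simp [diskMobius]

lemma diskMobius_diskMobius_neg (ha : ‖a‖ < 1) (hw : ‖w‖ < 1) :
    diskMobius a (diskMobius (-a) w) = w := by
  have ha' : ‖-a‖ < 1 := by rwa [norm_neg]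
  have hx : diskMobius (-a) w * (1 - conj a * w) = w - a := by
    have h := one_add_conj_mul_ne_zero ha' hw
    rw [map_neg, neg_mul, ← sub_eq_add_neg] at h
    rw [diskMobius, map_neg, neg_mul, ← sub_eq_add_neg, div_mul_cancel₀ _ h, neg_add_eq_sub]
  rw [diskMobius, div_eq_iff (one_add_conj_mul_ne_zero ha (norm_diskMobius_lt_one ha' hw))]
  linear_combination hx

lemma hasDerivAt_diskMobius (h : 1 + conj a * w ≠ 0) :
    HasDerivAt (diskMobius a) (((1 - ‖a‖ ^ 2 : ℝ) : ℂ) / (1 + conj a * w) ^ 2) w := by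
  have hnum : HasDerivAt (fun w => a + w) 1 w := (hasDerivAt_id w).const_add a
  have hden : HasDerivAt (fun w => 1 + conj a * w) (conj a) w := by
    simpa using ((hasDerivAt_id w).const_mul (conj a)).const_add 1
  refine (hnum.div hden h).congr_deriv ?_
  push_cast
  rw [← Complex.conj_mul']
  ring

end DiskMobius

lemma one_add_conj_neg_mul_self (b : ℂ) : 1 + conj (-b) * b = ((1 - ‖b‖ ^ 2 : ℝ) : ℂ) := by
  rw [map_neg, neg_mul, Complex.conj_mul']
  push_cast
  ring

lemma mul_norm_deriv_zero_le_of_mapsTo_ball {f : ℂ → ℂ} {r : ℝ} (hr : 0 < r)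
    (hf : DifferentiableOn ℂ f (ball 0 r)) (hmaps : MapsTo f (ball 0 r) (ball 0 1)) :
    r * ‖deriv f 0‖ ≤ 1 - ‖f 0‖ ^ 2 := by
  have h0 : (0 : ℂ) ∈ ball 0 r := mem_ball_self hr
  set b := f 0
  have hb : ‖b‖ < 1 := mem_ball_zero_iff.1 (hmaps h0)
  have hb' : ‖-b‖ < 1 := by rwa [norm_neg]
  have hn : 0 < 1 - ‖b‖ ^ 2 := by nlinarith [norm_nonneg b]
  have hden : ∀ w ∈ ball (0 : ℂ) r, 1 + conj (-b) * f w ≠ 0 := fun w hw =>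
    one_add_conj_mul_ne_zero hb' (mem_ball_zero_iff.1 (hmaps hw))
  have hg : DifferentiableOn ℂ (diskMobius (-b) ∘ f) (ball 0 r) := fun w hw =>
    (hasDerivAt_diskMobius (hden w hw)).differentiableAt.comp_differentiableWithinAt w (hf w hw)
  have hgmaps : MapsTo (diskMobius (-b) ∘ f) (ball 0 r) (closedBall ((diskMobius (-b) ∘ f) 0) 1) :=
    fun w hw => by
      rw [Function.comp_apply, diskMobius_neg_self, mem_closedBall_zero_iff]
      exact (norm_diskMobius_lt_one hb' (mem_ball_zero_iff.1 (hmaps hw))).le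
  have hderiv : HasDerivAt (diskMobius (-b) ∘ f)
      (((1 - ‖-b‖ ^ 2 : ℝ) : ℂ) / (1 + conj (-b) * b) ^ 2 * deriv f 0) 0 :=
    (hasDerivAt_diskMobius (hden 0 h0)).comp 0
      (hf.differentiableAt (ball_mem_nhds 0 hr)).hasDerivAt
  have hschwarz := Complex.norm_deriv_le_div_of_mapsTo_ball hg hgmaps hr
  rw [hderiv.deriv, one_add_conj_neg_mul_self, norm_neg, norm_mul, norm_div, norm_pow,
    Complex.norm_of_nonneg hn.le, le_div_iff₀ hr] at hschwarz
  rw [show (1 - ‖b‖ ^ 2) / (1 - ‖b‖ ^ 2) ^ 2 = (1 - ‖b‖ ^ 2)⁻¹ by field_simp] at hschwarz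
  rw [mul_assoc, inv_mul_le_iff₀ hn] at hschwarz
  linarith

/-- On the disc of radius `1/√3` the weight `1 - ‖w‖²` exceeds `2/3`, so `‖D‖ < 3K/2` there;
Schwarz–Pick on that disc gives the estimate, and this radius is the one minimising the
resulting constant `3√3/2`. -/
lemma bloch_deriv_zero_estimate {D : ℂ → ℂ} {K : ℝ} (hK : 0 < K)
    (hD : DifferentiableOn ℂ D (ball 0 1))
    (hb : ∀ w ∈ ball (0 : ℂ) 1, (1 - ‖w‖ ^ 2) * ‖D w‖ ≤ K) :
    3 * √3 / 2 * K * ‖deriv D 0‖ + ‖D 0‖ ^ 2 ≤ (3 * √3 / 2 * K) ^ 2 := by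
  have hs : √3 ^ 2 = 3 := Real.sq_sqrt (by norm_num)
  have hs1 : 1 < √3 := by rw [Real.lt_sqrt zero_le_one]; norm_num
  set r := (√3)⁻¹
  set M := 3 * K / 2
  have hr : 0 < r := by positivity
  have hr1 : r ≤ 1 := inv_le_one_of_one_le₀ hs1.le
  have hr2 : r ^ 2 = 1 / 3 := by rw [inv_pow, hs, one_div]
  have hM : 0 < M := by positivity
  have hrM : 3 * √3 / 2 * K = 3 * (r * M) := by
    simp only [r, M]
    field_simp
    exact hs
  have hlt : ∀ w ∈ ball (0 : ℂ) r, ‖D w‖ < M := fun w hw => by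
    have hw2 : ‖w‖ ^ 2 < 1 / 3 := by
      rw [← hr2]
      exact pow_lt_pow_left₀ (mem_ball_zero_iff.1 hw) (norm_nonneg w) two_ne_zero
    by_contra! hDw
    nlinarith [hb w (ball_subset_ball hr1 hw), mul_pos (sub_pos.2 hw2) (hM.trans_le hDw),
      show M = 3 * K / 2 from rfl]
  have hpick := mul_norm_deriv_zero_le_of_mapsTo_ball hr
    ((hD.mono (ball_subset_ball hr1)).div_const (M : ℂ))
    (fun w hw => by
      rw [mem_ball_zero_iff, norm_div, Complex.norm_real, Real.norm_of_nonneg hM.le,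
        div_lt_one hM]
      exact hlt w hw)
  rw [deriv_div_const, norm_div, norm_div, Complex.norm_real, Real.norm_of_nonneg hM.le] at hpick
  have key : r * M * ‖deriv D 0‖ ≤ M ^ 2 - ‖D 0‖ ^ 2 := by
    have := mul_le_mul_of_nonneg_left hpick (sq_nonneg M)
    field_simp at this
    linarith
  rw [hrM, mul_pow, mul_pow, hr2]
  nlinarith [sq_nonneg ‖D 0‖]

/-- `(F ∘ φₐ) · φₐ'` for the disc automorphism `φₐ = diskMobius a`. -/
noncomputable def mobiusPullback (F : ℂ → ℂ) (a w : ℂ) : ℂ :=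
  F (diskMobius a w) * (((1 - ‖a‖ ^ 2 : ℝ) : ℂ) / (1 + conj a * w) ^ 2)

noncomputable def blochDeriv (F : ℂ → ℂ) (z : ℂ) : ℂ :=
  ((1 - ‖z‖ ^ 2 : ℝ) : ℂ) * deriv F z - 2 * conj z * F z

section MobiusPullback

variable {F : ℂ → ℂ} {a : ℂ}

lemma differentiableOn_mobiusPullback (ha : ‖a‖ < 1) (hF : DifferentiableOn ℂ F (ball 0 1)) :
    DifferentiableOn ℂ (mobiusPullback F a) (ball 0 1) := fun w hw => by
  have hw : ‖w‖ < 1 := mem_ball_zero_iff.1 hw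
  have hden := one_add_conj_mul_ne_zero ha hw
  have hφ : DifferentiableAt ℂ (diskMobius a) w := (hasDerivAt_diskMobius hden).differentiableAt
  have hFφ : DifferentiableAt ℂ F (diskMobius a w) :=
    hF.differentiableAt (isOpen_ball.mem_nhds
      (mem_ball_zero_iff.2 (norm_diskMobius_lt_one ha hw)))
  exact ((hFφ.comp w hφ).mul ((differentiableAt_const _).div
    (((differentiableAt_const _).add (differentiableAt_id.const_mul _)).pow 2)
    (pow_ne_zero 2 hden))).differentiableWithinAt

lemma weight_mul_norm_mobiusPullback {w : ℂ} (ha : ‖a‖ < 1) (hw : ‖w‖ < 1) :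
    (1 - ‖w‖ ^ 2) * ‖mobiusPullback F a w‖ =
      (1 - ‖diskMobius a w‖ ^ 2) * ‖F (diskMobius a w)‖ := by
  have hden : 0 < ‖1 + conj a * w‖ := norm_pos_iff.2 (one_add_conj_mul_ne_zero ha hw)
  have hn : 0 ≤ 1 - ‖a‖ ^ 2 := by nlinarith [norm_nonneg a]
  rw [one_sub_sq_norm_diskMobius ha hw, mobiusPullback, norm_mul, norm_div, norm_pow,
    Complex.norm_of_nonneg hn]
  field_simp

lemma weight_mul_norm_mobiusPullback_le {K : ℝ} (ha : ‖a‖ < 1)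
    (hb : ∀ z ∈ ball (0 : ℂ) 1, (1 - ‖z‖ ^ 2) * ‖F z‖ ≤ K) :
    ∀ w ∈ ball (0 : ℂ) 1, (1 - ‖w‖ ^ 2) * ‖mobiusPullback F a w‖ ≤ K := fun w hw => by
  have hw : ‖w‖ < 1 := mem_ball_zero_iff.1 hw
  rw [weight_mul_norm_mobiusPullback ha hw]
  exact hb _ (mem_ball_zero_iff.2 (norm_diskMobius_lt_one ha hw))

lemma mobiusPullback_zero : mobiusPullback F a 0 = ((1 - ‖a‖ ^ 2 : ℝ) : ℂ) * F a := by
  simp [mobiusPullback, diskMobius_zero_right, mul_comm]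

lemma hasDerivAt_mobiusPullback_zero (hF : DifferentiableAt ℂ F a) :
    HasDerivAt (mobiusPullback F a) (((1 - ‖a‖ ^ 2 : ℝ) : ℂ) * blochDeriv F a) 0 := by
  set n : ℂ := ((1 - ‖a‖ ^ 2 : ℝ) : ℂ)
  have hden : HasDerivAt (fun w => 1 + conj a * w) (conj a) 0 := by
    simpa using ((hasDerivAt_id (0 : ℂ)).const_mul (conj a)).const_add 1
  have hφ : HasDerivAt (diskMobius a) n 0 :=
    (hasDerivAt_diskMobius (by simp)).congr_deriv (by simp [n])
  have hFφ : HasDerivAt (fun w => F (diskMobius a w)) (deriv F a * n) 0 := by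
    have hFa : HasDerivAt F (deriv F a) (diskMobius a 0) := by
      rw [diskMobius_zero_right]
      exact hF.hasDerivAt
    exact hFa.comp 0 hφ
  have hφ' : HasDerivAt (fun w => n / (1 + conj a * w) ^ 2) (-2 * conj a * n) 0 := by
    refine ((hasDerivAt_const (0 : ℂ) n).div (hden.pow 2) (by simp)).congr_deriv ?_
    simp only [Pi.pow_apply, mul_zero, add_zero, one_pow, mul_one, Nat.cast_ofNat,
      Nat.add_one_sub_one, zero_sub, div_one]
    ring
  refine (hFφ.mul hφ').congr_deriv ?_
  simp only [blochDeriv, mul_zero, add_zero, one_pow, div_one, diskMobius_zero_right]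
  ring

end MobiusPullback

lemma bloch_deriv_estimate {F : ℂ → ℂ} {K : ℝ} {z : ℂ} (hK : 0 < K)
    (hF : DifferentiableOn ℂ F (ball 0 1))
    (hb : ∀ w ∈ ball (0 : ℂ) 1, (1 - ‖w‖ ^ 2) * ‖F w‖ ≤ K) (hz : ‖z‖ < 1) :
    3 * √3 / 2 * K * ((1 - ‖z‖ ^ 2) * ‖blochDeriv F z‖) + ((1 - ‖z‖ ^ 2) * ‖F z‖) ^ 2 ≤
      (3 * √3 / 2 * K) ^ 2 := by
  have hn : 0 ≤ 1 - ‖z‖ ^ 2 := by nlinarith [norm_nonneg z]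
  have hestimate := bloch_deriv_zero_estimate hK (differentiableOn_mobiusPullback hz hF)
    (weight_mul_norm_mobiusPullback_le hz hb)
  rwa [(hasDerivAt_mobiusPullback_zero
      (hF.differentiableAt (isOpen_ball.mem_nhds (mem_ball_zero_iff.2 hz)))).deriv,
    mobiusPullback_zero, norm_mul, norm_mul, Complex.norm_of_nonneg hn] at hestimate

lemma norm_blochDeriv_le {F : ℂ → ℂ} {K : ℝ} {z : ℂ} (hK : 0 < K)
    (hF : DifferentiableOn ℂ F (ball 0 1))
    (hb : ∀ w ∈ ball (0 : ℂ) 1, (1 - ‖w‖ ^ 2) * ‖F w‖ ≤ K) (hz : ‖z‖ < 1)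
    (hline : 3 * √3 / 2 * K * ‖z‖ ≤ (1 - ‖z‖ ^ 2) * ‖F z‖) :
    ‖blochDeriv F z‖ ≤ 3 * √3 / 2 * K := by
  set c := 3 * √3 / 2 * K
  have hn : 0 < 1 - ‖z‖ ^ 2 := by nlinarith [norm_nonneg z]
  have hestimate : c * ((1 - ‖z‖ ^ 2) * ‖blochDeriv F z‖) + ((1 - ‖z‖ ^ 2) * ‖F z‖) ^ 2 ≤
      c ^ 2 := bloch_deriv_estimate hK hF hb hz
  have hsq := pow_le_pow_left₀ (by positivity) hline 2
  refine le_of_mul_le_mul_left ?_ (mul_pos (by positivity : 0 < c) hn)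
  nlinarith

lemma sq_norm_ofReal_mul (t : ℝ) (α : ℂ) : ‖(t : ℂ) * α‖ ^ 2 = t ^ 2 * ‖α‖ ^ 2 := by
  rw [norm_mul, Complex.norm_real, Real.norm_eq_abs, mul_pow, sq_abs]

lemma hasDerivAt_weight_mul_comp_ofReal_mul {F : ℂ → ℂ} {α : ℂ} {t : ℝ}
    (hF : DifferentiableAt ℂ F (t * α)) :
    HasDerivAt (fun s : ℝ => ((1 - ‖(s : ℂ) * α‖ ^ 2 : ℝ) : ℂ) * F (s * α))
      (α * blochDeriv F (t * α)) t := by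
  have hweight : HasDerivAt (fun s : ℝ => ((1 - ‖(s : ℂ) * α‖ ^ 2 : ℝ) : ℂ))
      ((-(2 * t * ‖α‖ ^ 2) : ℝ) : ℂ) t := by
    simp only [sq_norm_ofReal_mul]
    refine HasDerivAt.ofReal_comp (((hasDerivAt_pow 2 t).mul_const _).const_sub 1
      |>.congr_deriv ?_)
    push_cast
    ring
  have hFt : HasDerivAt (fun s : ℝ => F (s * α)) (deriv F (t * α) * α) t :=
    HasDerivAt.comp_ofReal (e := fun w => F (w * α))
      ((hF.hasDerivAt.comp (t : ℂ) ((hasDerivAt_id _).mul_const α)).congr_deriv (by simp))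
  refine (hweight.mul hFt).congr_deriv ?_
  simp only [blochDeriv, map_mul, Complex.conj_ofReal]
  push_cast
  linear_combination (2 * (t : ℂ) * F (t * α)) * Complex.mul_conj' α

/-- With `c = 3√3/2 K`, `s(t) = (1 - ‖tα‖²) ‖F (tα)‖` satisfies
`(1 - ‖tα‖²) s' ≤ ‖α‖ (c - s² / c)`; wherever `s ≥ c ‖tα‖` this gives `s' ≤ c ‖α‖`, so `s`
cannot cross the line `‖F 0‖ + c ‖α‖ t` from below. -/
lemma weight_mul_norm_le_norm_zero_add {F : ℂ → ℂ} {K : ℝ} {α : ℂ} (hK : 0 < K)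
    (hF : DifferentiableOn ℂ F (ball 0 1))
    (hb : ∀ w ∈ ball (0 : ℂ) 1, (1 - ‖w‖ ^ 2) * ‖F w‖ ≤ K) (hα : ‖α‖ < 1) :
    (1 - ‖α‖ ^ 2) * ‖F α‖ ≤ ‖F 0‖ + 3 * √3 / 2 * K * ‖α‖ := by
  set c := 3 * √3 / 2 * K
  set q : ℝ → ℂ := fun t => ((1 - ‖(t : ℂ) * α‖ ^ 2 : ℝ) : ℂ) * F (t * α)
  have hnorm : ∀ t ∈ Icc (0 : ℝ) 1, ‖(t : ℂ) * α‖ = t * ‖α‖ := fun t ht => by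
    rw [norm_mul, Complex.norm_real, Real.norm_of_nonneg ht.1]
  have hball : ∀ t ∈ Icc (0 : ℝ) 1, ‖(t : ℂ) * α‖ < 1 := fun t ht => by
    rw [hnorm t ht]
    nlinarith [ht.2, norm_nonneg α]
  have hq : ∀ t ∈ Icc (0 : ℝ) 1, HasDerivAt q (α * blochDeriv F (t * α)) t := fun t ht =>
    hasDerivAt_weight_mul_comp_ofReal_mul
      (hF.differentiableAt (isOpen_ball.mem_nhds (mem_ball_zero_iff.2 (hball t ht))))
  have hnorm_q : ∀ t ∈ Icc (0 : ℝ) 1, ‖q t‖ = (1 - ‖(t : ℂ) * α‖ ^ 2) * ‖F (t * α)‖ :=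
    fun t ht => by
      have hn : 0 ≤ 1 - ‖(t : ℂ) * α‖ ^ 2 := by nlinarith [hball t ht, norm_nonneg ((t : ℂ) * α)]
      rw [norm_mul, Complex.norm_of_nonneg hn]
  have hfence : ∀ ε > 0, ‖q 1‖ ≤ ‖q 0‖ + ε + (c * ‖α‖ + ε) * 1 := fun ε hε =>
    image_norm_le_of_norm_deriv_right_lt_deriv_boundary
      (fun t ht => (hq t ht).continuousAt.continuousWithinAt)
      (fun t ht => (hq t (Ico_subset_Icc_self ht)).hasDerivWithinAt)
      (B := fun t => ‖q 0‖ + ε + (c * ‖α‖ + ε) * t) (B' := fun _ => c * ‖α‖ + ε)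
      (by simp only [mul_zero, add_zero]; linarith)
      (fun t => ((hasDerivAt_id t).const_mul _).const_add _ |>.congr_deriv (by simp))
      (fun t ht hcontact => by
        have ht' := Ico_subset_Icc_self ht
        have hline : c * ‖(t : ℂ) * α‖ ≤ (1 - ‖(t : ℂ) * α‖ ^ 2) * ‖F (t * α)‖ := by
          rw [← hnorm_q t ht', hcontact, hnorm t ht']
          nlinarith [norm_nonneg (q 0), ht'.1, norm_nonneg α]
        calc ‖α * blochDeriv F (t * α)‖ = ‖α‖ * ‖blochDeriv F (t * α)‖ := norm_mul _ _
          _ ≤ ‖α‖ * c := by gcongr; exact norm_blochDeriv_le hK hF hb (hball t ht') hline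
          _ < c * ‖α‖ + ε := by linarith)
      (right_mem_Icc.2 zero_le_one)
  have hq0 : q 0 = F 0 := by simp [q]
  have hq1 := hnorm_q 1 (right_mem_Icc.2 zero_le_one)
  rw [Complex.ofReal_one, one_mul] at hq1
  refine le_of_forall_pos_le_add fun ε hε => ?_
  have := hfence (ε / 2) (by positivity)
  rw [hq1, hq0] at this
  linarith

lemma weight_mul_norm_sub_le {F : ℂ → ℂ} {K : ℝ} {z₁ z₂ : ℂ}
    (hF : DifferentiableOn ℂ F (ball 0 1))
    (hb : ∀ w ∈ ball (0 : ℂ) 1, (1 - ‖w‖ ^ 2) * ‖F w‖ ≤ K) (hz₁ : ‖z₁‖ < 1) (hz₂ : ‖z₂‖ < 1) :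
    (1 - ‖z₁‖ ^ 2) * ‖F z₁‖ - (1 - ‖z₂‖ ^ 2) * ‖F z₂‖ ≤
      3 * √3 / 2 * K * ‖(z₁ - z₂) / (1 - conj z₂ * z₁)‖ := by
  have hn₂ : 0 ≤ 1 - ‖z₂‖ ^ 2 := by nlinarith [norm_nonneg z₂]
  have hB₂ : 0 ≤ (1 - ‖z₂‖ ^ 2) * ‖F z₂‖ := mul_nonneg hn₂ (norm_nonneg _)
  have hB₁ : 0 ≤ (1 - ‖z₁‖ ^ 2) * ‖F z₁‖ :=
    mul_nonneg (by nlinarith [norm_nonneg z₁]) (norm_nonneg _)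
  have hb₁ := hb z₁ (mem_ball_zero_iff.2 hz₁)
  rcases (hB₁.trans hb₁).eq_or_lt with rfl | hK
  · simp only [mul_zero, zero_mul]
    linarith
  have hz₂' : ‖-z₂‖ < 1 := by rwa [norm_neg]
  set α := diskMobius (-z₂) z₁ with hα_def
  have hα : ‖α‖ < 1 := norm_diskMobius_lt_one hz₂' hz₁
  have hray := weight_mul_norm_le_norm_zero_add hK (differentiableOn_mobiusPullback hz₂ hF)
    (weight_mul_norm_mobiusPullback_le hz₂ hb) hα
  rw [weight_mul_norm_mobiusPullback hz₂ hα, diskMobius_diskMobius_neg hz₂ hz₁,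
    mobiusPullback_zero, norm_mul, Complex.norm_of_nonneg hn₂] at hray
  have hαeq : α = (z₁ - z₂) / (1 - conj z₂ * z₁) := by
    rw [hα_def, diskMobius, map_neg, neg_mul, ← sub_eq_add_neg, neg_add_eq_sub]
  rw [← hαeq]
  linarith

lemma exists_norm_add_mul_eq (u v : ℂ) : ∃ ν : ℂ, ‖ν‖ = 1 ∧ ‖u + ν * v‖ = ‖u‖ + ‖v‖ := by
  set ν := exp ((arg u - arg v : ℝ) * I)
  have hν : ν * exp (arg v * I) = exp (arg u * I) := by
    rw [← Complex.exp_add]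
    congr 1
    push_cast
    ring
  refine ⟨ν, norm_exp_ofReal_mul_I _, ?_⟩
  have hsum : u + ν * v = ((‖u‖ + ‖v‖ : ℝ) : ℂ) * exp (arg u * I) := by
    push_cast
    linear_combination (-1 : ℂ) * norm_mul_exp_arg_mul_I u - ν * norm_mul_exp_arg_mul_I v +
      (‖v‖ : ℂ) * hν
  rw [hsum, norm_mul, norm_exp_ofReal_mul_I, mul_one, Complex.norm_of_nonneg (by positivity)]

lemma bloch_sub_le {h g : ℂ → ℂ} {K : ℝ} {z₁ z₂ : ℂ}
    (hh : DifferentiableOn ℂ h (ball 0 1)) (hg : DifferentiableOn ℂ g (ball 0 1))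
    (hK : ∀ z ∈ ball (0 : ℂ) 1, (1 - ‖z‖ ^ 2) * (‖deriv h z‖ + ‖deriv g z‖) ≤ K)
    (hz₁ : ‖z₁‖ < 1) (hz₂ : ‖z₂‖ < 1) :
    (1 - ‖z₁‖ ^ 2) * (‖deriv h z₁‖ + ‖deriv g z₁‖) -
        (1 - ‖z₂‖ ^ 2) * (‖deriv h z₂‖ + ‖deriv g z₂‖) ≤
      3 * √3 / 2 * K * ‖(z₁ - z₂) / (1 - conj z₂ * z₁)‖ := by
  obtain ⟨ν, hν, hνz₁⟩ := exists_norm_add_mul_eq (deriv h z₁) (deriv g z₁)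
  have hle : ∀ z, ‖deriv h z + ν * deriv g z‖ ≤ ‖deriv h z‖ + ‖deriv g z‖ := fun z =>
    (norm_add_le _ _).trans_eq (by rw [norm_mul, hν, one_mul])
  have hweight : ∀ z ∈ ball (0 : ℂ) 1, 0 ≤ 1 - ‖z‖ ^ 2 := fun z hz => by
    nlinarith [mem_ball_zero_iff.1 hz, norm_nonneg z]
  have hF : DifferentiableOn ℂ (fun z => deriv h z + ν * deriv g z) (ball 0 1) :=
    (hh.deriv isOpen_ball).add ((hg.deriv isOpen_ball).const_mul ν)
  have hFb : ∀ z ∈ ball (0 : ℂ) 1, (1 - ‖z‖ ^ 2) * ‖deriv h z + ν * deriv g z‖ ≤ K :=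
    fun z hz => (mul_le_mul_of_nonneg_left (hle z) (hweight z hz)).trans (hK z hz)
  have hdiff := weight_mul_norm_sub_le hF hFb hz₁ hz₂
  rw [hνz₁] at hdiff
  nlinarith [mul_le_mul_of_nonneg_left (hle z₂) (hweight z₂ (mem_ball_zero_iff.2 hz₂))]

lemma norm_sub_div_one_sub_conj_mul_comm (z w : ℂ) :
    ‖(z - w) / (1 - conj w * z)‖ = ‖(w - z) / (1 - conj z * w)‖ := by
  rw [norm_div, norm_div, norm_sub_rev z w, ← Complex.norm_conj (1 - conj z * w)]
  simp only [map_sub, map_one, map_mul, Complex.conj_conj, mul_comm]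

theorem statement8 (h g : ℂ → ℂ)
    (hh : DifferentiableOn ℂ h (Metric.ball 0 1))
    (hg : DifferentiableOn ℂ g (Metric.ball 0 1)) (K : ℝ)
    (hK : ∀ z ∈ Metric.ball (0 : ℂ) 1,
      (1 - ‖z‖ ^ 2) * (‖deriv h z‖ + ‖deriv g z‖) ≤ K) :
    ∀ z₁ ∈ Metric.ball (0 : ℂ) 1, ∀ z₂ ∈ Metric.ball (0 : ℂ) 1,
      |(1 - ‖z₁‖ ^ 2) * (‖deriv h z₁‖ + ‖deriv g z₁‖) -
        (1 - ‖z₂‖ ^ 2) * (‖deriv h z₂‖ + ‖deriv g z₂‖)| ≤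
        (3 * Real.sqrt 3 / 2) * K *
          ‖(z₁ - z₂) / (1 - (starRingEnd ℂ) z₂ * z₁)‖ := by
  intro z₁ hz₁ z₂ hz₂
  rw [mem_ball_zero_iff] at hz₁ hz₂
  rw [abs_sub_le_iff]
  refine ⟨bloch_sub_le hh hg hK hz₁ hz₂, ?_⟩
  rw [norm_sub_div_one_sub_conj_mul_comm]
  exact bloch_sub_le hh hg hK hz₂ hz₁
end

section
/- The constant 3√3/2 in the Lipschitz estimate |B_f(z₁) - B_f(z₂)| ≤ (3√3/2)‖f‖_s ρ(z₁,z₂) for harmonic Bloch mappings is sharp: for every ε ∈ (0, 3√3/2] there exist an analytic function f on 𝔻 with Bloch semi-norm ‖f‖_s = 1 and points z₁, z₂ ∈ 𝔻 such that |B_f(z₂) - B_f(z₁)| ≥ (3√3/2 - ε)·ρ(z₁,z₂). -/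
/-!
For `a ≥ 0` let `M(a) = max_{r ≥ 0} (1 - r²)(a + r)`, attained at the positive root `r₀` of
`3r² + 2ar = 1`, and `f(z) = (az - z²/2) / M(a)`. Then
`B_f(z) = (1 - |z|²)|a - z| / M(a) ≤ (1 - |z|²)(a + |z|) / M(a) ≤ 1`, with equality at `z = -r₀`,
so `‖f‖_s = 1`. At the points `0` and `a` we have `B_f(0) - B_f(a) = a / M(a)` and `ρ(0, a) = a`,
while `M(a) ≤ max_{r ≥ 0} (r - r³) + a = 2/(3√3) + a`; hence the ratio tends to `3√3/2` as
`a → 0`, and `a = ε / (3√3/2)²` already gives `3√3/2 - ε`.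
-/

open Metric

noncomputable section

def blochFn (f : ℂ → ℂ) (z : ℂ) : ℝ := (1 - ‖z‖ ^ 2) * ‖deriv f z‖

lemma sub_pow_three_le {r : ℝ} (hr : 0 ≤ r) : r - r ^ 3 ≤ 2 / (3 * √3) := by
  have hs : √3 ^ 2 = 3 := Real.sq_sqrt (by norm_num)
  have hsq : 0 ≤ (r - √3 / 3) ^ 2 * (r + 2 * √3 / 3) := by positivity
  have key : (r - √3 / 3) ^ 2 * (r + 2 * √3 / 3) = r ^ 3 - r + 2 * √3 / 9 := by
    linear_combination (2 * √3 / 27 - r / 3) * hs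
  have h : 2 / (3 * √3) = 2 * √3 / 9 := by
    rw [div_eq_div_iff (by positivity) (by norm_num)]
    linear_combination (-6) * hs
  linarith

def critRadius (a : ℝ) : ℝ := (√(a ^ 2 + 3) - a) / 3

lemma critRadius_sq_add (a : ℝ) : 3 * critRadius a ^ 2 + 2 * a * critRadius a = 1 := by
  have h : √(a ^ 2 + 3) ^ 2 = a ^ 2 + 3 := Real.sq_sqrt (by positivity)
  unfold critRadius
  linear_combination h / 3

lemma critRadius_pos (a : ℝ) : 0 < critRadius a := by
  have h : √(a ^ 2) < √(a ^ 2 + 3) := Real.sqrt_lt_sqrt (sq_nonneg a) (by linarith)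
  rw [Real.sqrt_sq_eq_abs] at h
  unfold critRadius
  linarith [le_abs_self a]

lemma critRadius_lt_one {a : ℝ} (ha : 0 ≤ a) : critRadius a < 1 := by
  have h : √(a ^ 2 + 3) < √((a + 3) ^ 2) := Real.sqrt_lt_sqrt (by positivity) (by nlinarith)
  rw [Real.sqrt_sq (by linarith)] at h
  unfold critRadius
  linarith

def blochPeak (a : ℝ) : ℝ := (1 - critRadius a ^ 2) * (a + critRadius a)

lemma mul_le_blochPeak {a r : ℝ} (ha : 0 ≤ a) (hr : 0 ≤ r) :
    (1 - r ^ 2) * (a + r) ≤ blochPeak a := by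
  set r₀ := critRadius a
  have hcrit := critRadius_sq_add a
  have h : 0 ≤ (r - r₀) ^ 2 * (r + 2 * r₀ + a) := by
    have := critRadius_pos a
    positivity
  have key : blochPeak a - (1 - r ^ 2) * (a + r) = (r - r₀) ^ 2 * (r + 2 * r₀ + a) := by
    unfold blochPeak
    linear_combination (r - r₀) * hcrit
  linarith

lemma blochPeak_pos {a : ℝ} (ha : 0 ≤ a) : 0 < blochPeak a := by
  have h0 := critRadius_pos a
  have h1 := critRadius_lt_one ha
  unfold blochPeak
  have : 0 < 1 - critRadius a ^ 2 := by nlinarith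
  positivity

lemma blochPeak_le {a : ℝ} (ha : 0 ≤ a) : blochPeak a ≤ 2 / (3 * √3) + a := by
  have h := sub_pow_three_le (critRadius_pos a).le
  have : 0 ≤ a * critRadius a ^ 2 := by positivity
  unfold blochPeak
  linarith

lemma sub_le_inv_blochPeak {ε : ℝ} (hε : 0 ≤ ε) (hεK : ε ≤ 3 * √3 / 2) :
    3 * √3 / 2 - ε ≤ 1 / blochPeak (ε / (3 * √3 / 2) ^ 2) := by
  set K := 3 * √3 / 2
  have hK : 0 < K := by positivity
  have ha : 0 ≤ ε / K ^ 2 := by positivity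
  have hM := blochPeak_pos ha
  have hMle : blochPeak (ε / K ^ 2) ≤ (K + ε) / K ^ 2 := by
    calc blochPeak (ε / K ^ 2) ≤ 2 / (3 * √3) + ε / K ^ 2 := blochPeak_le ha
      _ = K⁻¹ + ε / K ^ 2 := by rw [inv_div]
      _ = (K + ε) / K ^ 2 := by field_simp
  rw [le_div_iff₀ hM]
  calc (K - ε) * blochPeak (ε / K ^ 2) ≤ (K - ε) * ((K + ε) / K ^ 2) := by
        gcongr
    _ = 1 - (ε / K) ^ 2 := by field_simp; ring
    _ ≤ 1 := by linarith [sq_nonneg (ε / K)]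

def blochWitness (a : ℝ) (z : ℂ) : ℂ := (a * z - z ^ 2 / 2) / blochPeak a

lemma hasDerivAt_blochWitness (a : ℝ) (z : ℂ) :
    HasDerivAt (blochWitness a) ((a - z) / blochPeak a) z := by
  have h : HasDerivAt (fun x : ℂ => a * x - x ^ 2 / 2) (a * 1 - ↑2 * z ^ (2 - 1) / 2) z :=
    ((hasDerivAt_id' z).const_mul (a : ℂ)).sub ((hasDerivAt_pow 2 z).div_const 2)
  exact (h.div_const _).congr_deriv (by norm_num)

lemma blochFn_blochWitness {a : ℝ} (ha : 0 ≤ a) (z : ℂ) :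
    blochFn (blochWitness a) z = (1 - ‖z‖ ^ 2) * ‖(a : ℂ) - z‖ / blochPeak a := by
  rw [blochFn, (hasDerivAt_blochWitness a z).deriv, norm_div, Complex.norm_real,
    Real.norm_of_nonneg (blochPeak_pos ha).le, mul_div_assoc]

lemma blochFn_blochWitness_le_one {a : ℝ} (ha : 0 ≤ a) {z : ℂ} (hz : ‖z‖ ≤ 1) :
    blochFn (blochWitness a) z ≤ 1 := by
  rw [blochFn_blochWitness ha, div_le_one (blochPeak_pos ha)]
  have htri : ‖(a : ℂ) - z‖ ≤ a + ‖z‖ := by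
    simpa [abs_of_nonneg ha] using norm_sub_le (a : ℂ) z
  calc (1 - ‖z‖ ^ 2) * ‖(a : ℂ) - z‖ ≤ (1 - ‖z‖ ^ 2) * (a + ‖z‖) := by
        gcongr
        nlinarith [norm_nonneg z]
    _ ≤ blochPeak a := mul_le_blochPeak ha (norm_nonneg z)

lemma blochFn_blochWitness_neg_critRadius {a : ℝ} (ha : 0 ≤ a) :
    blochFn (blochWitness a) (-critRadius a) = 1 := by
  have h0 := critRadius_pos a
  rw [blochFn_blochWitness ha, div_eq_one_iff_eq (blochPeak_pos ha).ne', blochPeak]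
  have : (a : ℂ) - -(critRadius a : ℂ) = ((a + critRadius a : ℝ) : ℂ) := by push_cast; ring
  rw [norm_neg, this, Complex.norm_real, Complex.norm_real, Real.norm_of_nonneg h0.le,
    Real.norm_of_nonneg (by linarith)]

lemma isLUB_blochFn_blochWitness {a : ℝ} (ha : 0 ≤ a) :
    IsLUB {y : ℝ | ∃ z ∈ ball (0 : ℂ) 1, y = blochFn (blochWitness a) z} 1 := by
  refine IsGreatest.isLUB ⟨⟨-critRadius a, ?_, (blochFn_blochWitness_neg_critRadius ha).symm⟩, ?_⟩
  · simpa [abs_of_pos (critRadius_pos a)] using critRadius_lt_one ha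
  · rintro _ ⟨z, hz, rfl⟩
    exact blochFn_blochWitness_le_one ha (by simpa using (mem_ball_zero_iff.mp hz).le)

lemma blochFn_blochWitness_self {a : ℝ} (ha : 0 ≤ a) : blochFn (blochWitness a) a = 0 := by
  simp [blochFn_blochWitness ha]

lemma blochFn_blochWitness_zero {a : ℝ} (ha : 0 ≤ a) :
    blochFn (blochWitness a) 0 = a / blochPeak a := by
  simp [blochFn_blochWitness ha, abs_of_nonneg ha]

end

theorem statement9 :
    ∀ ε : ℝ, 0 < ε → ε ≤ 3 * Real.sqrt 3 / 2 →
    ∃ f : ℂ → ℂ, DifferentiableOn ℂ f (Metric.ball 0 1) ∧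
      IsLUB {y : ℝ | ∃ z ∈ Metric.ball (0 : ℂ) 1,
        y = (1 - ‖z‖ ^ 2) * ‖deriv f z‖} 1 ∧
      ∃ z₁ ∈ Metric.ball (0 : ℂ) 1, ∃ z₂ ∈ Metric.ball (0 : ℂ) 1, z₁ ≠ z₂ ∧
        |(1 - ‖z₂‖ ^ 2) * ‖deriv f z₂‖ -
          (1 - ‖z₁‖ ^ 2) * ‖deriv f z₁‖| ≥
          (3 * Real.sqrt 3 / 2 - ε) *
            ‖(z₁ - z₂) / (1 - (starRingEnd ℂ) z₂ * z₁)‖ := by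
  intro ε hε hεK
  have hK : 1 < 3 * √3 / 2 := by
    have : 1 < √3 := by rw [Real.lt_sqrt zero_le_one]; norm_num
    linarith
  set K := 3 * √3 / 2
  set a := ε / K ^ 2
  have ha : 0 < a := by positivity
  have ha1 : a < 1 := by
    calc ε / K ^ 2 ≤ K / K ^ 2 := by gcongr
      _ = 1 / K := by field_simp
      _ < 1 := (div_lt_one (by linarith)).mpr hK
  refine ⟨blochWitness a,
    fun z _ => (hasDerivAt_blochWitness a z).differentiableAt.differentiableWithinAt,
    isLUB_blochFn_blochWitness ha.le, a, ?_, 0, by simp, by exact_mod_cast ha.ne', ?_⟩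
  · simpa [abs_of_pos ha] using ha1
  · change |blochFn _ 0 - blochFn _ a| ≥ _
    rw [blochFn_blochWitness_zero ha.le, blochFn_blochWitness_self ha.le]
    simp only [sub_zero, map_zero, zero_mul, div_one, Complex.norm_real, Real.norm_of_nonneg ha.le,
      abs_of_nonneg (div_nonneg ha.le (blochPeak_pos ha.le).le)]
    calc (K - ε) * a ≤ 1 / blochPeak a * a := by gcongr; exact sub_le_inv_blochPeak hε.le hεK
      _ = a / blochPeak a := by ring
end

section
/- Let φ_a(z) = (a-z)/(1-az) for a ∈ (0,1) and let η(z) = -(3√3/4)z². Then for f(z) = ∫₀^z β(a-ξ)/(a(1-aξ)³) dξ with β = (3√3/2)a(1-a²), one has (1-|z|²)|f'(z)| = (1-|φ_a(z)|²)|η'(φ_a(z))| for all z ∈ 𝔻, and hence sup_{z∈𝔻}(1-|z|²)|f'(z)| = 1. -/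
/-!
`f` is a primitive of `(η ∘ φ_a)'`, so by the chain rule and the identity
`(1 - |z|²) |φ_a'(z)| = 1 - |φ_a z|²` the Bloch quantity of `f` at `z` is that of `η` at `φ_a z`.
As `φ_a` is an involution of the disk, the supremum over `z` is the supremum of
`(3√3/2) |w| (1 - |w|²)` over the disk, which is `1`, attained at `|w| = 1/√3` since
`2 - 3√3 t (1 - t²) = (√3 t - 1)² (√3 t + 2)`.
-/

open Complex ComplexConjugate

noncomputable def diskAutomorphism (a z : ℂ) : ℂ := (a - z) / (1 - conj a * z)

section diskAutomorphism

variable {a z : ℂ}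

theorem diskAutomorphism_ofReal (a : ℝ) (z : ℂ) :
    diskAutomorphism a z = (a - z) / (1 - a * z) := by
  rw [diskAutomorphism, conj_ofReal]

theorem one_sub_conj_mul_ne_zero (ha : ‖a‖ ≤ 1) (hz : ‖z‖ < 1) : 1 - conj a * z ≠ 0 := by
  refine sub_ne_zero.mpr fun h => ?_
  have : ‖conj a * z‖ < 1 := by
    rw [norm_mul, RCLike.norm_conj]
    nlinarith [norm_nonneg a, norm_nonneg z]
  simp [← h] at this

theorem sq_norm_one_sub_conj_mul_sub_sq_norm_sub (a z : ℂ) :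
    ‖1 - conj a * z‖ ^ 2 - ‖a - z‖ ^ 2 = (1 - ‖a‖ ^ 2) * (1 - ‖z‖ ^ 2) := by
  simp only [← normSq_eq_norm_sq, normSq_apply, sub_re, sub_im, mul_re, mul_im, conj_re,
    conj_im, one_re, one_im]
  ring

theorem one_sub_sq_norm_diskAutomorphism (h : 1 - conj a * z ≠ 0) :
    1 - ‖diskAutomorphism a z‖ ^ 2 = (1 - ‖a‖ ^ 2) * (1 - ‖z‖ ^ 2) / ‖1 - conj a * z‖ ^ 2 := by
  rw [← sq_norm_one_sub_conj_mul_sub_sq_norm_sub, diskAutomorphism, norm_div, div_pow,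
    one_sub_div (pow_ne_zero 2 (norm_ne_zero_iff.mpr h))]

theorem norm_diskAutomorphism_lt_one (ha : ‖a‖ < 1) (hz : ‖z‖ < 1) :
    ‖diskAutomorphism a z‖ < 1 := by
  have h := one_sub_conj_mul_ne_zero ha.le hz
  have : 0 < 1 - ‖diskAutomorphism a z‖ ^ 2 := by
    rw [one_sub_sq_norm_diskAutomorphism h]
    have : 0 < ‖1 - conj a * z‖ := norm_pos_iff.mpr h
    have : 0 < 1 - ‖a‖ ^ 2 := by nlinarith [norm_nonneg a]
    have : 0 < 1 - ‖z‖ ^ 2 := by nlinarith [norm_nonneg z]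
    positivity
  nlinarith [norm_nonneg (diskAutomorphism a z)]

theorem diskAutomorphism_diskAutomorphism (ha : ‖a‖ < 1) (h : 1 - conj a * z ≠ 0) :
    diskAutomorphism a (diskAutomorphism a z) = z := by
  have ha' : 1 - conj a * a ≠ 0 := by
    rw [← normSq_eq_conj_mul_self, ← ofReal_one, ← ofReal_sub, ofReal_ne_zero, normSq_eq_norm_sq]
    nlinarith [norm_nonneg a]
  have hden : 1 - conj a * diskAutomorphism a z = (1 - conj a * a) / (1 - conj a * z) := by
    rw [eq_div_iff h, diskAutomorphism, sub_mul, mul_div_assoc', div_mul_cancel₀ _ h]; ring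
  have hnum : a - diskAutomorphism a z = z * (1 - conj a * a) / (1 - conj a * z) := by
    rw [eq_div_iff h, diskAutomorphism, sub_mul, div_mul_cancel₀ _ h]; ring
  rw [diskAutomorphism, hnum, hden, div_div_div_cancel_right₀ h, mul_div_cancel_right₀ _ ha']

theorem hasDerivAt_diskAutomorphism (h : 1 - conj a * z ≠ 0) :
    HasDerivAt (diskAutomorphism a) ((conj a * a - 1) / (1 - conj a * z) ^ 2) z := by
  refine (((hasDerivAt_id' z).const_sub a).fun_div
    (((hasDerivAt_id' z).const_mul (conj a)).const_sub 1) h).congr_deriv ?_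
  ring

theorem one_sub_sq_norm_mul_norm_deriv_diskAutomorphism (ha : ‖a‖ ≤ 1) (hz : ‖z‖ < 1) :
    (1 - ‖z‖ ^ 2) * ‖deriv (diskAutomorphism a) z‖ = 1 - ‖diskAutomorphism a z‖ ^ 2 := by
  have h := one_sub_conj_mul_ne_zero ha hz
  rw [(hasDerivAt_diskAutomorphism h).deriv, one_sub_sq_norm_diskAutomorphism h, norm_div,
    norm_pow, conj_mul', norm_sub_rev, ← ofReal_pow, ← ofReal_one, ← ofReal_sub,
    norm_real, Real.norm_of_nonneg (by nlinarith [norm_nonneg a])]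
  ring

theorem surjOn_diskAutomorphism_ball (ha : ‖a‖ < 1) :
    Set.SurjOn (diskAutomorphism a) (Metric.ball 0 1) (Metric.ball 0 1) := fun w hw => by
  have hw := mem_ball_zero_iff.mp hw
  exact ⟨diskAutomorphism a w, mem_ball_zero_iff.mpr (norm_diskAutomorphism_lt_one ha hw),
    diskAutomorphism_diskAutomorphism ha (one_sub_conj_mul_ne_zero ha.le hw)⟩

theorem one_sub_sq_norm_mul_norm_deriv_comp_diskAutomorphism {g : ℂ → ℂ} (ha : ‖a‖ ≤ 1)
    (hz : ‖z‖ < 1) (hg : DifferentiableAt ℂ g (diskAutomorphism a z)) :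
    (1 - ‖z‖ ^ 2) * ‖deriv (g ∘ diskAutomorphism a) z‖ =
      (1 - ‖diskAutomorphism a z‖ ^ 2) * ‖deriv g (diskAutomorphism a z)‖ := by
  rw [deriv_comp z hg
      (hasDerivAt_diskAutomorphism (one_sub_conj_mul_ne_zero ha hz)).differentiableAt,
    norm_mul, mul_left_comm, one_sub_sq_norm_mul_norm_deriv_diskAutomorphism ha hz, mul_comm]

end diskAutomorphism

noncomputable def blochExtremal (w : ℂ) : ℂ := -(3 * Real.sqrt 3 / 4) * w ^ 2

theorem hasDerivAt_blochExtremal (w : ℂ) : HasDerivAt blochExtremal (-(3 * √3 / 2) * w) w := by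
  refine ((hasDerivAt_pow 2 w).const_mul (-(3 * (√3 : ℂ) / 4))).congr_deriv ?_
  ring

theorem norm_deriv_blochExtremal (w : ℂ) : ‖deriv blochExtremal w‖ = 3 * √3 / 2 * ‖w‖ := by
  rw [(hasDerivAt_blochExtremal w).deriv, norm_mul, norm_neg,
    show 3 * (√3 : ℂ) / 2 = ((3 * √3 / 2 : ℝ) : ℂ) by push_cast; rfl, norm_real,
    Real.norm_of_nonneg (by positivity)]

theorem hasDerivAt_blochExtremal_comp_diskAutomorphism_ofReal {a : ℝ} (ha : a ≠ 0) {z : ℂ}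
    (hz : 1 - a * z ≠ 0) :
    HasDerivAt (blochExtremal ∘ diskAutomorphism a)
      (((3 * √3 / 2 * (a * (1 - a ^ 2)) : ℝ) : ℂ) * (a - z) / (a * (1 - a * z) ^ 3)) z := by
  have hz' : 1 - conj (a : ℂ) * z ≠ 0 := by rwa [conj_ofReal]
  refine ((hasDerivAt_blochExtremal _).comp z (hasDerivAt_diskAutomorphism hz')).congr_deriv ?_
  have ha' : (a : ℂ) ≠ 0 := ofReal_ne_zero.mpr ha
  rw [diskAutomorphism_ofReal, conj_ofReal]
  push_cast
  field_simp
  ring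

theorem one_sub_sq_mul_three_sqrt_three_div_two_mul_le_one {t : ℝ} (ht : 0 ≤ t) :
    (1 - t ^ 2) * (3 * √3 / 2 * t) ≤ 1 := by
  have hs : √3 ^ 2 = 3 := Real.sq_sqrt (by norm_num)
  have hfactor : 2 - (1 - t ^ 2) * (3 * √3 * t) = (√3 * t - 1) ^ 2 * (√3 * t + 2) := by
    linear_combination (-(√3 * t ^ 3)) * hs
  nlinarith [mul_nonneg (sq_nonneg (√3 * t - 1)) (by positivity : (0 : ℝ) ≤ √3 * t + 2)]

theorem isLUB_one_sub_sq_norm_mul_norm_deriv_blochExtremal :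
    IsLUB {y : ℝ | ∃ w ∈ Metric.ball (0 : ℂ) 1, y = (1 - ‖w‖ ^ 2) * ‖deriv blochExtremal w‖} 1 := by
  refine ⟨?_, fun b hb => hb ⟨(((√3)⁻¹ : ℝ) : ℂ), ?_, ?_⟩⟩
  · rintro _ ⟨w, -, rfl⟩
    rw [norm_deriv_blochExtremal]
    exact one_sub_sq_mul_three_sqrt_three_div_two_mul_le_one (norm_nonneg w)
  · rw [mem_ball_zero_iff, norm_real, Real.norm_of_nonneg (by positivity)]
    exact inv_lt_one_of_one_lt₀ (Real.lt_sqrt_of_sq_lt (by norm_num))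
  · have hs : √3 ≠ 0 := by positivity
    rw [norm_deriv_blochExtremal, norm_real, Real.norm_of_nonneg (by positivity), inv_pow,
      Real.sq_sqrt (by norm_num)]
    field_simp
    norm_num

theorem statement10 (a : ℝ) (ha : a ∈ Set.Ioo (0 : ℝ) 1)
    (β : ℝ) (hβ : β = 3 * Real.sqrt 3 / 2 * (a * (1 - a ^ 2)))
    (f : ℂ → ℂ)
    (hf : ∀ z ∈ Metric.ball (0 : ℂ) 1,
      HasDerivAt f ((β : ℂ) * ((a : ℂ) - z) / ((a : ℂ) * (1 - (a : ℂ) * z) ^ 3)) z) :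
    (∀ z ∈ Metric.ball (0 : ℂ) 1,
      (1 - ‖z‖ ^ 2) * ‖deriv f z‖ =
        (1 - ‖((a : ℂ) - z) / (1 - (a : ℂ) * z)‖ ^ 2) *
          ‖deriv (fun w : ℂ => -(3 * Real.sqrt 3 / 4) * w ^ 2)
            (((a : ℂ) - z) / (1 - (a : ℂ) * z))‖) ∧
    IsLUB {y : ℝ | ∃ z ∈ Metric.ball (0 : ℂ) 1,
      y = (1 - ‖z‖ ^ 2) * ‖deriv f z‖} 1 := by
  obtain ⟨ha0, ha1⟩ := ha
  have haD : ‖(a : ℂ)‖ < 1 := by rwa [norm_real, Real.norm_of_nonneg ha0.le]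
  -- `f' = (η ∘ φ_a)'`, so the Bloch quantity of `f` is that of `η` transported by `φ_a`
  have hbloch : ∀ z ∈ Metric.ball (0 : ℂ) 1, (1 - ‖z‖ ^ 2) * ‖deriv f z‖ =
      (1 - ‖diskAutomorphism a z‖ ^ 2) * ‖deriv blochExtremal (diskAutomorphism a z)‖ := by
    intro z hz
    have hz1 := mem_ball_zero_iff.mp hz
    have hden := one_sub_conj_mul_ne_zero haD.le hz1
    rw [conj_ofReal] at hden
    rw [(hf z hz).deriv, hβ,
      ← (hasDerivAt_blochExtremal_comp_diskAutomorphism_ofReal ha0.ne' hden).deriv,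
      one_sub_sq_norm_mul_norm_deriv_comp_diskAutomorphism haD.le hz1
        (hasDerivAt_blochExtremal _).differentiableAt]
  have hS : {y : ℝ | ∃ z ∈ Metric.ball (0 : ℂ) 1, y = (1 - ‖z‖ ^ 2) * ‖deriv f z‖} =
      {y : ℝ | ∃ w ∈ Metric.ball (0 : ℂ) 1, y = (1 - ‖w‖ ^ 2) * ‖deriv blochExtremal w‖} := by
    ext y
    constructor
    · rintro ⟨z, hz, rfl⟩
      exact ⟨diskAutomorphism a z, mem_ball_zero_iff.mpr
        (norm_diskAutomorphism_lt_one haD (mem_ball_zero_iff.mp hz)), hbloch z hz⟩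
    · rintro ⟨w, hw, rfl⟩
      obtain ⟨z, hz, rfl⟩ := surjOn_diskAutomorphism_ball haD hw
      exact ⟨z, hz, (hbloch z hz).symm⟩
  simp only [← diskAutomorphism_ofReal]
  exact ⟨hbloch, hS ▸ isLUB_one_sub_sq_norm_mul_norm_deriv_blochExtremal⟩
end

section
/- Let p ∈ (1,∞), α ≥ 1 with (α = 1 and β ≤ 0) or (α > 1, β ∈ ℝ), and let ω be a majorant with lim_{t→0⁺} ω(t)/t < ∞. Let φ: 𝔻 → 𝔻 be analytic. If sup_{z∈𝔻} |φ'(z)|·ω((1-|z|²)^α (log(e/(1-|z|²)))^β)/(1-|φ(z)|²)^{1+1/p} < ∞, then the composition operator C_φ maps the harmonic Hardy space H^p_H(𝔻) boundedly into the Bloch-type space B^{α,β}_{H_ω}, i.e., there is a constant M with |f(φ(0))| + sup_{z∈𝔻} Λ_{f∘φ}(z)·ω((1-|z|²)^α(log(e/(1-|z|²)))^β) ≤ M‖f‖_p for all f ∈ H^p_H(𝔻). -/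
/-!
Write `f = h + conj g` and `P_w` for the Poisson kernel of the circle `|ζ| = r`. The Poisson
formula gives `f w` as the mean of `P_w • f`, and the Cauchy formula gives `h' w` as the mean of
`ζ / (ζ - w) ^ 2 • f`: the `conj g` part drops out because the reflection `conj ζ = r ^ 2 / ζ`
makes it the conjugate of the mean of a holomorphic function vanishing at `0`. Conjugating `f`
swaps `h` and `g`. As `‖ζ / (ζ - w) ^ 2‖ = r / (r ^ 2 - ‖w‖ ^ 2) * P_w ζ`, Hölder's inequality for
the probability weight `P_w ≤ (r + ‖w‖) / (r - ‖w‖)` bounds both by the `p`-mean of `f`. Letting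
`r → 1` gives `Λ_f w ≤ 2 * 4 ^ (1 / p) * ‖f‖_p / (1 - ‖w‖ ^ 2) ^ (1 + 1 / p)`, and the chain rule
`Λ_{f ∘ φ} = (Λ_f ∘ φ) * ‖φ'‖` finishes the proof.
-/
open Complex Metric MeasureTheory Real Set
open scoped ENNReal ComplexConjugate

section CircleAverage
variable {c : ℂ} {R : ℝ}

lemma circleAverage_eq_integral {E : Type*} [NormedAddCommGroup E] [NormedSpace ℝ E] (F : ℂ → E) :
    circleAverage F c R =
      ∫ θ, F (circleMap c R θ) ∂((2 * π)⁻¹.toNNReal • volume.restrict (Ioc 0 (2 * π))) := by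
  rw [circleAverage_def, intervalIntegral.integral_of_le two_pi_pos.le,
    integral_smul_nnreal_measure, NNReal.smul_def, Real.coe_toNNReal _ (by positivity)]

lemma memLp_comp_circleMap {u : ℂ → ℝ} (hu : ContinuousOn u (sphere c |R|)) (e : ℝ≥0∞)
    (μ : Measure ℝ) [IsFiniteMeasure μ] : MemLp (fun θ ↦ u (circleMap c R θ)) e μ := by
  obtain ⟨C, hC⟩ := (isCompact_sphere c |R|).exists_bound_of_continuousOn hu
  exact .of_bound (hu.comp_continuous (continuous_circleMap c R)
    (circleMap_mem_sphere' c R)).aestronglyMeasurable C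
    (.of_forall fun θ ↦ hC _ (circleMap_mem_sphere' c R θ))

theorem circleAverage_mul_le_circleAverage_rpow_mul {p q : ℝ} (hpq : p.HolderConjugate q)
    {u v : ℂ → ℝ} (hu : ContinuousOn u (sphere c |R|)) (hv : ContinuousOn v (sphere c |R|))
    (hu0 : ∀ ζ ∈ sphere c |R|, 0 ≤ u ζ) (hv0 : ∀ ζ ∈ sphere c |R|, 0 ≤ v ζ) :
    circleAverage (fun ζ ↦ u ζ * v ζ) c R ≤
      circleAverage (fun ζ ↦ u ζ ^ p) c R ^ (1 / p) *
        circleAverage (fun ζ ↦ v ζ ^ q) c R ^ (1 / q) := by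
  simp only [circleAverage_eq_integral]
  exact integral_mul_le_Lp_mul_Lq_of_nonneg hpq
    (.of_forall fun θ ↦ hu0 _ (circleMap_mem_sphere' c R θ))
    (.of_forall fun θ ↦ hv0 _ (circleMap_mem_sphere' c R θ))
    (memLp_comp_circleMap hu _ _) (memLp_comp_circleMap hv _ _)

theorem norm_circleAverage_le {E : Type*} [NormedAddCommGroup E] [NormedSpace ℝ E] (F : ℂ → E) :
    ‖circleAverage F c R‖ ≤ circleAverage (fun ζ ↦ ‖F ζ‖) c R := by
  simp only [circleAverage_eq_integral]
  exact norm_integral_le_integral_norm _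

theorem circleAverage_conj (F : ℂ → ℂ) :
    circleAverage (fun ζ ↦ conj (F ζ)) c R = conj (circleAverage F c R) := by
  simp only [circleAverage_eq_integral]
  exact integral_conj

theorem circleAverage_mul_le_weight_mul_Lp {p q : ℝ} (hpq : p.HolderConjugate q) {P u : ℂ → ℝ}
    (hP : ContinuousOn P (sphere c |R|)) (hu : ContinuousOn u (sphere c |R|))
    (hP0 : ∀ ζ ∈ sphere c |R|, 0 ≤ P ζ) (hu0 : ∀ ζ ∈ sphere c |R|, 0 ≤ u ζ) :
    circleAverage (fun ζ ↦ P ζ * u ζ) c R ≤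
      circleAverage P c R ^ (1 / q) * circleAverage (fun ζ ↦ P ζ * u ζ ^ p) c R ^ (1 / p) := by
  have h1 : 1 / p + 1 / q = 1 := by rw [one_div, one_div, hpq.inv_add_inv_eq_one]
  have hsplit : Set.EqOn (fun ζ ↦ P ζ * u ζ)
      (fun ζ ↦ (P ζ ^ (1 / p) * u ζ) * P ζ ^ (1 / q)) (sphere c |R|) := fun ζ hζ ↦ by
    dsimp only
    rw [mul_right_comm, ← Real.rpow_add' (hP0 ζ hζ) (by rw [h1]; exact one_ne_zero), h1,
      Real.rpow_one]
  have hPp : Set.EqOn (fun ζ ↦ (P ζ ^ (1 / p) * u ζ) ^ p) (fun ζ ↦ P ζ * u ζ ^ p)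
      (sphere c |R|) := fun ζ hζ ↦ by
    dsimp only
    rw [Real.mul_rpow (Real.rpow_nonneg (hP0 ζ hζ) _) (hu0 ζ hζ), ← Real.rpow_mul (hP0 ζ hζ),
      one_div_mul_cancel hpq.ne_zero, Real.rpow_one]
  have hPq : Set.EqOn (fun ζ ↦ (P ζ ^ (1 / q)) ^ q) P (sphere c |R|) := fun ζ hζ ↦ by
    dsimp only
    rw [← Real.rpow_mul (hP0 ζ hζ), one_div_mul_cancel hpq.symm.ne_zero, Real.rpow_one]
  rw [circleAverage_congr_sphere hsplit, ← circleAverage_congr_sphere hPp,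
    ← circleAverage_congr_sphere hPq, mul_comm]
  exact circleAverage_mul_le_circleAverage_rpow_mul hpq
    ((hP.rpow_const fun _ _ ↦ .inr hpq.one_div_nonneg).mul hu)
    (hP.rpow_const fun _ _ ↦ .inr hpq.symm.one_div_nonneg)
    (fun ζ hζ ↦ mul_nonneg (Real.rpow_nonneg (hP0 ζ hζ) _) (hu0 ζ hζ))
    (fun ζ hζ ↦ Real.rpow_nonneg (hP0 ζ hζ) _)

theorem circleAverage_mul_le_of_circleAverage_eq_one {p q : ℝ} (hpq : p.HolderConjugate q)
    {P u : ℂ → ℝ} {B : ℝ} (hP : ContinuousOn P (sphere c |R|)) (hu : ContinuousOn u (sphere c |R|))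
    (hP0 : ∀ ζ ∈ sphere c |R|, 0 ≤ P ζ) (hu0 : ∀ ζ ∈ sphere c |R|, 0 ≤ u ζ)
    (hPB : ∀ ζ ∈ sphere c |R|, P ζ ≤ B) (havg : circleAverage P c R = 1) :
    circleAverage (fun ζ ↦ P ζ * u ζ) c R ≤
      B ^ (1 / p) * circleAverage (fun ζ ↦ u ζ ^ p) c R ^ (1 / p) := by
  have hup : ContinuousOn (fun ζ ↦ u ζ ^ p) (sphere c |R|) :=
    hu.rpow_const fun _ _ ↦ .inr hpq.nonneg
  have hPB' : circleAverage (fun ζ ↦ P ζ * u ζ ^ p) c R ≤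
      circleAverage (fun ζ ↦ B * u ζ ^ p) c R :=
    circleAverage_mono (hP.mul hup).circleIntegrable' (continuousOn_const.mul hup).circleIntegrable'
      fun ζ hζ ↦ mul_le_mul_of_nonneg_right (hPB ζ hζ) (Real.rpow_nonneg (hu0 ζ hζ) _)
  have hB : 0 ≤ B :=
    (hP0 _ (circleMap_mem_sphere' c R 0)).trans (hPB _ (circleMap_mem_sphere' c R 0))
  calc circleAverage (fun ζ ↦ P ζ * u ζ) c R
      ≤ circleAverage (fun ζ ↦ P ζ * u ζ ^ p) c R ^ (1 / p) := by
        simpa [havg] using circleAverage_mul_le_weight_mul_Lp hpq hP hu hP0 hu0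
    _ ≤ (B * circleAverage (fun ζ ↦ u ζ ^ p) c R) ^ (1 / p) := by
        rw [← smul_eq_mul, ← circleAverage_fun_smul]
        exact Real.rpow_le_rpow (circleAverage_nonneg_of_nonneg fun ζ hζ ↦
          mul_nonneg (hP0 ζ hζ) (Real.rpow_nonneg (hu0 ζ hζ) _)) hPB' hpq.one_div_nonneg
    _ = B ^ (1 / p) * circleAverage (fun ζ ↦ u ζ ^ p) c R ^ (1 / p) :=
        Real.mul_rpow hB (circleAverage_nonneg_of_nonneg fun ζ hζ ↦ Real.rpow_nonneg (hu0 ζ hζ) _)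

end CircleAverage

section PoissonKernel
variable {r : ℝ} {w ζ : ℂ}

lemma sphere_abs_subset_closedBall (hr : 0 ≤ r) : sphere (0 : ℂ) |r| ⊆ closedBall 0 r := by
  rw [abs_of_nonneg hr]
  exact sphere_subset_closedBall

lemma poissonKernel_zero_apply (w ζ : ℂ) :
    poissonKernel 0 w ζ = (‖ζ‖ ^ 2 - ‖w‖ ^ 2) / ‖ζ - w‖ ^ 2 := by
  simp [poissonKernel_def]

lemma poissonKernel_zero_nonneg (hζ : ζ ∈ sphere 0 |r|) (hw : w ∈ ball 0 r) :
    0 ≤ poissonKernel 0 w ζ := by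
  rw [abs_of_pos (pos_of_mem_ball hw), mem_sphere_zero_iff_norm] at hζ
  rw [mem_ball_zero_iff] at hw
  rw [poissonKernel_zero_apply, hζ]
  exact div_nonneg (by nlinarith [norm_nonneg w]) (sq_nonneg _)

lemma poissonKernel_zero_le (hζ : ζ ∈ sphere 0 |r|) (hw : w ∈ ball 0 r) :
    poissonKernel 0 w ζ ≤ (r + ‖w‖) / (r - ‖w‖) := by
  rw [abs_of_pos (pos_of_mem_ball hw)] at hζ
  simpa [poissonKernel_eq_re_herglotzRieszKernel, herglotzRieszKernel_def]
    using re_herglotzRieszKernel_le hζ hw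

lemma continuousOn_poissonKernel_zero (hw : w ∈ ball 0 r) :
    ContinuousOn (poissonKernel 0 w) (sphere 0 |r|) := by
  rw [poissonKernel_eq_re_herglotzRieszKernel]
  exact continuous_re.comp_continuousOn (continuousOn_herglotzRieszKernel_sphere hw)

lemma circleAverage_poissonKernel_zero (hw : w ∈ ball 0 r) :
    circleAverage (poissonKernel 0 w) 0 r = 1 := by
  have hP := (diffContOnCl_const (c := (1 : ℂ))).circleAverage_poissonKernel_smul hw
  have hint : CircleIntegrable (poissonKernel 0 w • fun _ ↦ (1 : ℂ)) 0 r :=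
    ((continuous_ofReal.comp_continuousOn (continuousOn_poissonKernel_zero hw)).smul
      continuousOn_const).circleIntegrable'
  have := reCLM.circleAverage_comp_comm hint
  rw [hP] at this
  simpa [Function.comp_def] using this

theorem circleAverage_poissonKernel_mul_norm_le {p q : ℝ} (hpq : p.HolderConjugate q)
    (hw : w ∈ ball 0 r) {f : ℂ → ℂ} (hf : ContinuousOn f (sphere 0 |r|)) :
    circleAverage (fun ζ ↦ poissonKernel 0 w ζ * ‖f ζ‖) 0 r ≤
      ((r + ‖w‖) / (r - ‖w‖)) ^ (1 / p) * circleAverage (fun ζ ↦ ‖f ζ‖ ^ p) 0 r ^ (1 / p) :=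
  circleAverage_mul_le_of_circleAverage_eq_one hpq (continuousOn_poissonKernel_zero hw)
    hf.norm (fun _ hζ ↦ poissonKernel_zero_nonneg hζ hw) (fun _ _ ↦ norm_nonneg _)
    (fun _ hζ ↦ poissonKernel_zero_le hζ hw) (circleAverage_poissonKernel_zero hw)

lemma norm_div_sub_sq_eq_mul_poissonKernel (hζ : ζ ∈ sphere 0 |r|) (hw : w ∈ ball 0 r) :
    ‖ζ / (ζ - w) ^ 2‖ = r / (r ^ 2 - ‖w‖ ^ 2) * poissonKernel 0 w ζ := by
  have hr := pos_of_mem_ball hw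
  rw [abs_of_pos hr, mem_sphere_zero_iff_norm] at hζ
  have hζw : ‖ζ - w‖ ≠ 0 := norm_ne_zero_iff.mpr (sub_ne_zero.mpr fun h ↦ by
    rw [mem_ball_zero_iff, ← h, hζ] at hw; exact lt_irrefl r hw)
  have hrw : r ^ 2 - ‖w‖ ^ 2 ≠ 0 := by
    rw [mem_ball_zero_iff] at hw; nlinarith [norm_nonneg w]
  rw [poissonKernel_zero_apply, norm_div, norm_pow, hζ]
  field_simp

end PoissonKernel

section HarmonicDisc
variable {r : ℝ} {w : ℂ} {h g : ℂ → ℂ}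

lemma conj_eq_sq_div_of_mem_sphere {ζ : ℂ} (hζ : ζ ∈ sphere 0 r) : conj ζ = (r : ℂ) ^ 2 / ζ := by
  rcases eq_or_ne ζ 0 with rfl | hζ0
  · simp
  rw [eq_div_iff hζ0, mul_comm, mul_conj', ← mem_sphere_zero_iff_norm.mp hζ]

lemma sq_sub_conj_mul_ne_zero (hw : w ∈ ball 0 r) {ζ : ℂ} (hζ : ζ ∈ closedBall 0 r) :
    (r : ℂ) ^ 2 - conj w * ζ ≠ 0 := by
  rw [mem_ball_zero_iff] at hw
  rw [mem_closedBall_zero_iff] at hζ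
  refine sub_ne_zero.mpr fun heq ↦ ?_
  have : ‖(r : ℂ) ^ 2‖ < r ^ 2 := by
    rw [heq, norm_mul, norm_conj]
    nlinarith [norm_nonneg w, norm_nonneg ζ]
  simp at this

theorem circleAverage_poissonKernel_smul_add_conj (hh : DiffContOnCl ℂ h (ball 0 r))
    (hg : DiffContOnCl ℂ g (ball 0 r)) (hw : w ∈ ball 0 r) :
    circleAverage (fun ζ ↦ poissonKernel 0 w ζ • (h ζ + conj (g ζ))) 0 r = h w + conj (g w) := by
  have hsphere := sphere_abs_subset_closedBall (pos_of_mem_ball hw).le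
  have hP := continuousOn_poissonKernel_zero hw
  have hconj : circleAverage (fun ζ ↦ poissonKernel 0 w ζ • conj (g ζ)) 0 r = conj (g w) := by
    simp_rw [← RCLike.conj_smul]
    rw [circleAverage_conj]
    exact congrArg conj (hg.circleAverage_poissonKernel_smul hw)
  have hint : CircleIntegrable (fun ζ ↦ poissonKernel 0 w ζ • h ζ) 0 r :=
    (hP.smul (hh.continuousOn_ball.mono hsphere)).circleIntegrable'
  have hint' : CircleIntegrable (fun ζ ↦ poissonKernel 0 w ζ • conj (g ζ)) 0 r :=
    (hP.smul (continuous_conj.comp_continuousOn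
      (hg.continuousOn_ball.mono hsphere))).circleIntegrable'
  simp only [smul_add]
  rw [circleAverage_fun_add hint hint', hconj]
  exact congrArg (· + conj (g w)) (hh.circleAverage_poissonKernel_smul hw)

theorem circleAverage_div_sub_sq_smul {U : Set ℂ} (hU : IsOpen U) (hrU : closedBall 0 r ⊆ U)
    (hh : DifferentiableOn ℂ h U) (hw : w ∈ ball 0 r) :
    circleAverage (fun ζ ↦ (ζ / (ζ - w) ^ 2) • h ζ) 0 r = deriv h w := by
  have hr := pos_of_mem_ball hw
  rw [circleAverage_eq_circleIntegral hr.ne',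
    ← two_pi_I_inv_smul_circleIntegral_sub_sq_inv_smul_of_differentiable hU hrU hh hw]
  congr 1
  refine circleIntegral.integral_congr hr.le fun ζ hζ ↦ ?_
  have hζ0 : ζ ≠ 0 := ne_of_mem_sphere hζ hr.ne'
  simp only [sub_zero, smul_eq_mul]
  field_simp

theorem circleAverage_div_sub_sq_smul_conj (hg : DiffContOnCl ℂ g (ball 0 r))
    (hw : w ∈ ball 0 r) :
    circleAverage (fun ζ ↦ (ζ / (ζ - w) ^ 2) • conj (g ζ)) 0 r = 0 := by
  have hr := pos_of_mem_ball hw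
  have habs : |r| = r := abs_of_pos hr
  set G : ℂ → ℂ := fun ζ ↦ ((r : ℂ) ^ 2 * ζ / ((r : ℂ) ^ 2 - conj w * ζ) ^ 2) • g ζ
  have hG : DiffContOnCl ℂ G (ball 0 |r|) := by
    rw [habs]
    refine DiffContOnCl.smul (DifferentiableOn.diffContOnCl ?_) hg
    rw [closure_ball 0 hr.ne']
    exact ((differentiableOn_const _).mul differentiableOn_id).div
      (((differentiableOn_const _).sub ((differentiableOn_const _).mul differentiableOn_id)).pow 2)
      fun ζ hζ ↦ pow_ne_zero 2 (sq_sub_conj_mul_ne_zero hw hζ)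
  have heq : Set.EqOn (fun ζ ↦ (ζ / (ζ - w) ^ 2) • conj (g ζ)) (fun ζ ↦ conj (G ζ))
      (sphere 0 |r|) := fun ζ hζ ↦ by
    rw [habs] at hζ
    have hζ0 : ζ ≠ 0 := ne_of_mem_sphere hζ hr.ne'
    have hζw : ζ - w ≠ 0 := sub_ne_zero.mpr (sphere_disjoint_ball.ne_of_mem hζ hw)
    have hr0 : (r : ℂ) ≠ 0 := ofReal_ne_zero.mpr hr.ne'
    simp only [G, smul_eq_mul, map_mul, map_div₀, map_pow, map_sub, conj_conj, conj_ofReal,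
      conj_eq_sq_div_of_mem_sphere hζ]
    field_simp
  rw [circleAverage_congr_sphere heq, circleAverage_conj, hG.circleAverage]
  simp [G]

lemma continuousOn_div_sub_sq (hw : w ∈ ball 0 r) :
    ContinuousOn (fun ζ ↦ ζ / (ζ - w) ^ 2) (sphere 0 |r|) :=
  continuousOn_id.div ((continuousOn_id.sub continuousOn_const).pow 2) fun _ hζ ↦
    pow_ne_zero 2 (sub_ne_zero.mpr (sphere_disjoint_ball.ne_of_mem hζ
      (ball_subset_ball (le_abs_self r) hw)))

theorem circleAverage_div_sub_sq_smul_add_conj {U : Set ℂ} (hU : IsOpen U)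
    (hrU : closedBall 0 r ⊆ U) (hh : DifferentiableOn ℂ h U) (hg : DifferentiableOn ℂ g U)
    (hw : w ∈ ball 0 r) :
    circleAverage (fun ζ ↦ (ζ / (ζ - w) ^ 2) • (h ζ + conj (g ζ))) 0 r = deriv h w := by
  have hsphere := (sphere_abs_subset_closedBall (pos_of_mem_ball hw).le).trans hrU
  have hK := continuousOn_div_sub_sq hw
  have hint : CircleIntegrable (fun ζ ↦ (ζ / (ζ - w) ^ 2) • h ζ) 0 r :=
    (hK.smul (hh.continuousOn.mono hsphere)).circleIntegrable'
  have hint' : CircleIntegrable (fun ζ ↦ (ζ / (ζ - w) ^ 2) • conj (g ζ)) 0 r :=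
    (hK.smul (continuous_conj.comp_continuousOn (hg.continuousOn.mono hsphere))).circleIntegrable'
  simp only [smul_add]
  rw [circleAverage_fun_add hint hint', circleAverage_div_sub_sq_smul hU hrU hh hw,
    circleAverage_div_sub_sq_smul_conj (hg.diffContOnCl_ball hrU) hw, add_zero]

theorem norm_add_conj_le_circleAverage {p q : ℝ} (hpq : p.HolderConjugate q)
    (hh : DiffContOnCl ℂ h (ball 0 r)) (hg : DiffContOnCl ℂ g (ball 0 r)) (hw : w ∈ ball 0 r) :
    ‖h w + conj (g w)‖ ≤ ((r + ‖w‖) / (r - ‖w‖)) ^ (1 / p) *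
      circleAverage (fun ζ ↦ ‖h ζ + conj (g ζ)‖ ^ p) 0 r ^ (1 / p) := by
  have hsphere := sphere_abs_subset_closedBall (pos_of_mem_ball hw).le
  calc ‖h w + conj (g w)‖
      = ‖circleAverage (fun ζ ↦ poissonKernel 0 w ζ • (h ζ + conj (g ζ))) 0 r‖ := by
        rw [circleAverage_poissonKernel_smul_add_conj hh hg hw]
    _ ≤ circleAverage (fun ζ ↦ ‖poissonKernel 0 w ζ • (h ζ + conj (g ζ))‖) 0 r :=
        norm_circleAverage_le _
    _ = circleAverage (fun ζ ↦ poissonKernel 0 w ζ * ‖h ζ + conj (g ζ)‖) 0 r :=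
        circleAverage_congr_sphere fun ζ hζ ↦ by
          rw [norm_smul, Real.norm_of_nonneg (poissonKernel_zero_nonneg hζ hw)]
    _ ≤ _ := circleAverage_poissonKernel_mul_norm_le hpq hw
        ((hh.continuousOn_ball.add (continuous_conj.comp_continuousOn hg.continuousOn_ball)).mono
          hsphere)

theorem norm_deriv_le_circleAverage {p q : ℝ} (hpq : p.HolderConjugate q) {U : Set ℂ}
    (hU : IsOpen U) (hrU : closedBall 0 r ⊆ U) (hh : DifferentiableOn ℂ h U)
    (hg : DifferentiableOn ℂ g U) (hw : w ∈ ball 0 r) :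
    ‖deriv h w‖ ≤ r / (r ^ 2 - ‖w‖ ^ 2) * (((r + ‖w‖) / (r - ‖w‖)) ^ (1 / p) *
      circleAverage (fun ζ ↦ ‖h ζ + conj (g ζ)‖ ^ p) 0 r ^ (1 / p)) := by
  have hr := pos_of_mem_ball hw
  have hsphere := (sphere_abs_subset_closedBall hr.le).trans hrU
  have hrw : 0 ≤ r / (r ^ 2 - ‖w‖ ^ 2) := by
    rw [mem_ball_zero_iff] at hw
    exact div_nonneg hr.le (by nlinarith [norm_nonneg w])
  calc ‖deriv h w‖
      = ‖circleAverage (fun ζ ↦ (ζ / (ζ - w) ^ 2) • (h ζ + conj (g ζ))) 0 r‖ := by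
        rw [circleAverage_div_sub_sq_smul_add_conj hU hrU hh hg hw]
    _ ≤ circleAverage (fun ζ ↦ ‖(ζ / (ζ - w) ^ 2) • (h ζ + conj (g ζ))‖) 0 r :=
        norm_circleAverage_le _
    _ = circleAverage (fun ζ ↦ (r / (r ^ 2 - ‖w‖ ^ 2)) •
          (poissonKernel 0 w ζ * ‖h ζ + conj (g ζ)‖)) 0 r :=
        circleAverage_congr_sphere fun ζ hζ ↦ by
          rw [norm_smul, norm_div_sub_sq_eq_mul_poissonKernel hζ hw, smul_eq_mul, mul_assoc]
    _ ≤ _ := by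
        rw [circleAverage_fun_smul, smul_eq_mul]
        exact mul_le_mul_of_nonneg_left (circleAverage_poissonKernel_mul_norm_le hpq hw
          ((hh.continuousOn.add (continuous_conj.comp_continuousOn hg.continuousOn)).mono
            hsphere)) hrw

lemma norm_add_conj_symm (a b : ℂ) : ‖b + conj a‖ = ‖a + conj b‖ := by
  rw [← norm_conj, map_add, conj_conj, add_comm]

theorem norm_deriv_add_norm_deriv_le_circleAverage {p q : ℝ} (hpq : p.HolderConjugate q)
    {U : Set ℂ} (hU : IsOpen U) (hrU : closedBall 0 r ⊆ U) (hh : DifferentiableOn ℂ h U)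
    (hg : DifferentiableOn ℂ g U) (hw : w ∈ ball 0 r) :
    ‖deriv h w‖ + ‖deriv g w‖ ≤ 2 * (r / (r ^ 2 - ‖w‖ ^ 2)) * ((r + ‖w‖) / (r - ‖w‖)) ^ (1 / p) *
      circleAverage (fun ζ ↦ ‖h ζ + conj (g ζ)‖ ^ p) 0 r ^ (1 / p) := by
  have hderiv := norm_deriv_le_circleAverage hpq hU hrU hg hh hw
  simp only [norm_add_conj_symm] at hderiv
  linarith [norm_deriv_le_circleAverage hpq hU hrU hh hg hw]

end HarmonicDisc

section HardySpace
variable {p N : ℝ} {h g : ℂ → ℂ} {w : ℂ}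

lemma le_of_forall_mem_Ioo_le_of_continuousAt {F : ℝ → ℝ} {a b x : ℝ} (hab : a < b)
    (hF : ContinuousAt F b) (hle : ∀ r ∈ Ioo a b, x ≤ F r) : x ≤ F b :=
  ge_of_tendsto (hF.tendsto.mono_left nhdsWithin_le_nhds)
    (Filter.eventually_of_mem (Ioo_mem_nhdsLT hab) hle)

lemma circleAverage_rpow_one_div_le (hp : 0 < p) (hN : 0 ≤ N) {f : ℂ → ℂ} {r : ℝ}
    (hf : circleAverage (fun ζ ↦ ‖f ζ‖ ^ p) 0 r ≤ N ^ p) :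
    circleAverage (fun ζ ↦ ‖f ζ‖ ^ p) 0 r ^ (1 / p) ≤ N := by
  rw [one_div]
  exact (Real.rpow_inv_le_iff_of_pos (circleAverage_nonneg_of_nonneg fun _ _ ↦ by positivity)
    hN hp).mpr hf

variable (hp : 1 < p) (hh : DifferentiableOn ℂ h (ball 0 1))
  (hg : DifferentiableOn ℂ g (ball 0 1)) (hN : 0 ≤ N)
  (hmean : ∀ r ∈ Ioo (0 : ℝ) 1, circleAverage (fun ζ ↦ ‖h ζ + conj (g ζ)‖ ^ p) 0 r ≤ N ^ p)
include hp hh hg hN hmean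

theorem norm_add_conj_le_of_forall_circleAverage_le (hw : w ∈ ball 0 1) :
    ‖h w + conj (g w)‖ ≤ ((1 + ‖w‖) / (1 - ‖w‖)) ^ (1 / p) * N := by
  set s := ‖w‖
  have hs1 : s < 1 := mem_ball_zero_iff.mp hw
  have hcont : ContinuousAt (fun r ↦ ((r + s) / (r - s)) ^ (1 / p) * N) 1 := by
    have h1 : (1 : ℝ) - s ≠ 0 := by linarith
    have hp' : 0 ≤ 1 / p := by positivity
    fun_prop (disch := first | assumption | exact .inr hp')
  have hle : ∀ r ∈ Ioo s 1, ‖h w + conj (g w)‖ ≤ ((r + s) / (r - s)) ^ (1 / p) * N :=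
    fun r ⟨hsr, hr1⟩ ↦ by
      have hball : closedBall (0 : ℂ) r ⊆ ball 0 1 := closedBall_subset_ball hr1
      have hB : 0 ≤ ((r + s) / (r - s)) ^ (1 / p) :=
        Real.rpow_nonneg (div_nonneg (by linarith [norm_nonneg w]) (by linarith)) _
      exact (norm_add_conj_le_circleAverage (.conjExponent hp) (hh.diffContOnCl_ball hball)
        (hg.diffContOnCl_ball hball) (mem_ball_zero_iff.mpr hsr)).trans
        (mul_le_mul_of_nonneg_left (circleAverage_rpow_one_div_le (by linarith) hN
          (hmean r ⟨(norm_nonneg w).trans_lt hsr, hr1⟩)) hB)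
  exact (le_of_forall_mem_Ioo_le_of_continuousAt hs1 hcont hle :)

theorem norm_deriv_add_norm_deriv_mul_le_of_forall_circleAverage_le (hw : w ∈ ball 0 1) :
    (‖deriv h w‖ + ‖deriv g w‖) * (1 - ‖w‖ ^ 2) ^ (1 + 1 / p) ≤ 2 * 4 ^ (1 / p) * N := by
  set s := ‖w‖
  have hs1 : s < 1 := mem_ball_zero_iff.mp hw
  have hs0 : 0 ≤ s := norm_nonneg w
  have hp' : 0 ≤ 1 / p := by positivity
  have hcont : ContinuousAt
      (fun r ↦ 2 * (r / (r ^ 2 - s ^ 2)) * ((r + s) / (r - s)) ^ (1 / p) * N) 1 := by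
    have h1 : (1 : ℝ) ^ 2 - s ^ 2 ≠ 0 := by nlinarith
    have h2 : (1 : ℝ) - s ≠ 0 := by linarith
    fun_prop (disch := first | assumption | exact .inr hp')
  have hradius := le_of_forall_mem_Ioo_le_of_continuousAt hs1 hcont fun r ⟨hsr, hr1⟩ ↦ by
    have hball : closedBall (0 : ℂ) r ⊆ ball 0 1 := closedBall_subset_ball hr1
    have hC : 0 ≤ 2 * (r / (r ^ 2 - s ^ 2)) * ((r + s) / (r - s)) ^ (1 / p) :=
      mul_nonneg (mul_nonneg zero_le_two (div_nonneg (by linarith) (by nlinarith)))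
        (Real.rpow_nonneg (div_nonneg (by linarith) (by linarith)) _)
    exact (norm_deriv_add_norm_deriv_le_circleAverage (.conjExponent hp) isOpen_ball hball hh hg
      (mem_ball_zero_iff.mpr hsr)).trans (mul_le_mul_of_nonneg_left
        (circleAverage_rpow_one_div_le (by linarith) hN (hmean r ⟨hs0.trans_lt hsr, hr1⟩)) hC)
  simp only [one_pow] at hradius
  have ha : 0 < 1 - s ^ 2 := by nlinarith
  have hB : 0 ≤ (1 + s) / (1 - s) := div_nonneg (by linarith) (by linarith)
  calc (‖deriv h w‖ + ‖deriv g w‖) * (1 - s ^ 2) ^ (1 + 1 / p)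
      ≤ 2 * (1 / (1 - s ^ 2)) * ((1 + s) / (1 - s)) ^ (1 / p) * N * (1 - s ^ 2) ^ (1 + 1 / p) :=
        mul_le_mul_of_nonneg_right hradius (Real.rpow_nonneg ha.le _)
    _ = 2 * (((1 + s) / (1 - s)) ^ (1 / p) * (1 - s ^ 2) ^ (1 / p)) * N := by
        rw [Real.rpow_one_add' ha.le (by positivity)]
        field_simp
    _ = 2 * ((1 + s) ^ 2) ^ (1 / p) * N := by
        rw [← Real.mul_rpow hB ha.le]
        congr 3
        field_simp [show 1 - s ≠ 0 by linarith]
        ring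
    _ ≤ 2 * 4 ^ (1 / p) * N := by gcongr; nlinarith

theorem norm_deriv_comp_add_norm_deriv_comp_mul_le {φ : ℂ → ℂ} {z : ℂ} {K W : ℝ}
    (hφ : DifferentiableAt ℂ φ z) (hφz : φ z ∈ ball 0 1) (hK : 0 ≤ K)
    (hφK : ‖deriv φ z‖ * W ≤ K * (1 - ‖φ z‖ ^ 2) ^ (1 + 1 / p)) :
    (‖deriv (h ∘ φ) z‖ + ‖deriv (g ∘ φ) z‖) * W ≤ K * (2 * 4 ^ (1 / p) * N) := by
  rw [deriv_comp z (hh.differentiableAt (isOpen_ball.mem_nhds hφz)) hφ,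
    deriv_comp z (hg.differentiableAt (isOpen_ball.mem_nhds hφz)) hφ, norm_mul, norm_mul,
    ← add_mul, mul_assoc]
  calc _ ≤ (‖deriv h (φ z)‖ + ‖deriv g (φ z)‖) * (K * (1 - ‖φ z‖ ^ 2) ^ (1 + 1 / p)) := by
        gcongr
    _ ≤ _ := by
        rw [mul_left_comm]
        exact mul_le_mul_of_nonneg_left
          (norm_deriv_add_norm_deriv_mul_le_of_forall_circleAverage_le hp hh hg hN hmean hφz) hK

end HardySpace

theorem statement16_general (p α β : ℝ) (hp : 1 < p)
    (ω : ℝ → ℝ)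
    (φ : ℂ → ℂ)
    (hφa : DifferentiableOn ℂ φ (Metric.ball 0 1))
    (hφm : Set.MapsTo φ (Metric.ball 0 1) (Metric.ball 0 1))
    (hbound : ∃ K : ℝ, ∀ z ∈ Metric.ball (0 : ℂ) 1,
      ‖deriv φ z‖ *
        ω ((1 - ‖z‖ ^ 2) ^ α *
          (Real.log (Real.exp 1 / (1 - ‖z‖ ^ 2))) ^ β) /
        (1 - ‖φ z‖ ^ 2) ^ (1 + 1 / p) ≤ K) :
    ∃ M : ℝ, 0 < M ∧ ∀ (h g : ℂ → ℂ) (N : ℝ),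
      DifferentiableOn ℂ h (Metric.ball 0 1) →
      DifferentiableOn ℂ g (Metric.ball 0 1) → g 0 = 0 → 0 ≤ N →
      (∀ r ∈ Set.Ioo (0 : ℝ) 1,
        (2 * Real.pi)⁻¹ * ∫ θ in (0 : ℝ)..2 * Real.pi,
          ‖h (r * Complex.exp (θ * Complex.I)) +
            (starRingEnd ℂ) (g (r * Complex.exp (θ * Complex.I)))‖ ^ p ≤ N ^ p) →
      ∀ z ∈ Metric.ball (0 : ℂ) 1,
        ‖h (φ 0) + (starRingEnd ℂ) (g (φ 0))‖ +
          (‖deriv (h ∘ φ) z‖ + ‖deriv (g ∘ φ) z‖) *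
            ω ((1 - ‖z‖ ^ 2) ^ α *
              (Real.log (Real.exp 1 / (1 - ‖z‖ ^ 2))) ^ β) ≤ M * N := by
  obtain ⟨K, hK⟩ := hbound
  have hφ0 : φ 0 ∈ ball 0 1 := hφm (mem_ball_self one_pos)
  set C₀ := ((1 + ‖φ 0‖) / (1 - ‖φ 0‖)) ^ (1 / p)
  have hC₀ : 0 < C₀ := Real.rpow_pos_of_pos
    (div_pos (by positivity) (by linarith [mem_ball_zero_iff.mp hφ0])) _
  refine ⟨C₀ + 2 * 4 ^ (1 / p) * max K 0, by positivity, ?_⟩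
  intro h g N hh hg _ hN hmean z hz
  replace hmean : ∀ r ∈ Ioo (0 : ℝ) 1,
      circleAverage (fun ζ ↦ ‖h ζ + conj (g ζ)‖ ^ p) 0 r ≤ N ^ p := by
    simpa only [circleAverage_def, circleMap_zero, smul_eq_mul] using hmean
  have hφz := hφm hz
  have hX : 0 < (1 - ‖φ z‖ ^ 2) ^ (1 + 1 / p) :=
    Real.rpow_pos_of_pos (by nlinarith [mem_ball_zero_iff.mp hφz, norm_nonneg (φ z)]) _
  have hφK := ((div_le_iff₀ hX).mp (hK z hz)).trans
    (mul_le_mul_of_nonneg_right (le_max_left K 0) hX.le)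
  calc _ ≤ C₀ * N + max K 0 * (2 * 4 ^ (1 / p) * N) :=
        add_le_add (norm_add_conj_le_of_forall_circleAverage_le hp hh hg hN hmean hφ0)
          (norm_deriv_comp_add_norm_deriv_comp_mul_le hp hh hg hN hmean
            (hφa.differentiableAt (isOpen_ball.mem_nhds hz)) hφz (le_max_right K 0) hφK)
    _ = _ := by ring

theorem statement16 (p α β : ℝ) (hp : 1 < p)
    (hαβ : (α = 1 ∧ β ≤ 0) ∨ 1 < α)
    (ω : ℝ → ℝ) (hω0 : ω 0 = 0)
    (hωcont : ContinuousOn ω (Set.Ici 0))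
    (hωmono : MonotoneOn ω (Set.Ici 0))
    (hωdec : ∀ s t : ℝ, 0 < s → s ≤ t → ω t / t ≤ ω s / s)
    (hωlim : ∃ L : ℝ, Filter.Tendsto (fun t => ω t / t)
      (nhdsWithin 0 (Set.Ioi 0)) (nhds L))
    (φ : ℂ → ℂ)
    (hφa : DifferentiableOn ℂ φ (Metric.ball 0 1))
    (hφm : Set.MapsTo φ (Metric.ball 0 1) (Metric.ball 0 1))
    (hbound : ∃ K : ℝ, ∀ z ∈ Metric.ball (0 : ℂ) 1,
      ‖deriv φ z‖ *
        ω ((1 - ‖z‖ ^ 2) ^ α *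
          (Real.log (Real.exp 1 / (1 - ‖z‖ ^ 2))) ^ β) /
        (1 - ‖φ z‖ ^ 2) ^ (1 + 1 / p) ≤ K) :
    ∃ M : ℝ, 0 < M ∧ ∀ (h g : ℂ → ℂ) (N : ℝ),
      DifferentiableOn ℂ h (Metric.ball 0 1) →
      DifferentiableOn ℂ g (Metric.ball 0 1) → g 0 = 0 → 0 ≤ N →
      (∀ r ∈ Set.Ioo (0 : ℝ) 1,
        (2 * Real.pi)⁻¹ * ∫ θ in (0 : ℝ)..2 * Real.pi,
          ‖h (r * Complex.exp (θ * Complex.I)) +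
            (starRingEnd ℂ) (g (r * Complex.exp (θ * Complex.I)))‖ ^ p ≤ N ^ p) →
      ∀ z ∈ Metric.ball (0 : ℂ) 1,
        ‖h (φ 0) + (starRingEnd ℂ) (g (φ 0))‖ +
          (‖deriv (h ∘ φ) z‖ + ‖deriv (g ∘ φ) z‖) *
            ω ((1 - ‖z‖ ^ 2) ^ α *
              (Real.log (Real.exp 1 / (1 - ‖z‖ ^ 2))) ^ β) ≤ M * N :=
  statement16_general p α β hp ω φ hφa hφm hbound
end
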